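/- arXiv:2510.06685 — 5 statements merged into one kernel-verified Lean document; each statement's English description precedes it below -/
import Mathlib

section
/- Let β > 0, K > 0, δ ∈ (0, 1), ε > 0 and d ∈ ℕ. Let v be a standard Gaussian vector in ℝ^d and set σ = ‖v‖₂/√d. Define Δ = | L_K(β) − e^{β²/2} | and L = β · sup_{s: |s−1| ≤ δ} | L_K′(βs) |, and assume 0 < L < ∞. Then P( | L_K(βσ) − e^{β²/2} | > ε ) ≤ 2 exp( −(d/2) · ( (ε − Δ)₊ / L )² ) + 2 exp(−d δ²/2), where (x)₊ = max(x, 0). -/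
open MeasureTheory ProbabilityTheory
open scoped ENNReal NNReal Real

/-- `Φ`, the cumulative distribution function of the standard normal distribution. -/
noncomputable def Phi (x : ℝ) : ℝ := ((gaussianReal 0 1) (Set.Iic x)).toReal

/-- `L_K(s) = e^{s²/2} (Φ((K−s²)/s) − Φ((−K−s²)/s)) / (Φ(K/s) − Φ(−K/s))`. -/
noncomputable def LK (K s : ℝ) : ℝ :=
  Real.exp (s ^ 2 / 2) * (Phi ((K - s ^ 2) / s) - Phi ((-K - s ^ 2) / s)) /
    (Phi (K / s) - Phi (-K / s))

lemma Phi_eq (x : ℝ) : Phi x = ∫ t in Set.Iic x, gaussianPDFReal 0 1 t := by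
  rw [Phi, gaussianReal_apply_eq_integral 0 one_ne_zero, ENNReal.toReal_ofReal]
  exact setIntegral_nonneg measurableSet_Iic fun t _ => gaussianPDFReal_nonneg 0 1 t

lemma continuous_pdf : Continuous (gaussianPDFReal 0 1) := by
  unfold gaussianPDFReal; fun_prop

lemma hasDerivAt_Phi (x : ℝ) : HasDerivAt Phi (gaussianPDFReal 0 1 x) x := by
  have hint : Integrable (gaussianPDFReal 0 1) := integrable_gaussianPDFReal 0 1
  have key : Phi = fun u => Phi 0 + ∫ t in (0:ℝ)..u, gaussianPDFReal 0 1 t := by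
    funext u
    rw [Phi_eq, Phi_eq,
      ← intervalIntegral.integral_Iic_sub_Iic hint.integrableOn hint.integrableOn]
    ring
  rw [key]
  exact (intervalIntegral.integral_hasDerivAt_right hint.intervalIntegrable
    continuous_pdf.aestronglyMeasurable.stronglyMeasurableAtFilter continuous_pdf.continuousAt
    ).const_add _

lemma Phi_lt {a b : ℝ} (hab : a < b) : Phi a < Phi b := by
  have hint : Integrable (gaussianPDFReal 0 1) := integrable_gaussianPDFReal 0 1
  have h : Phi b - Phi a = ∫ t in a..b, gaussianPDFReal 0 1 t := by
    rw [Phi_eq, Phi_eq]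
    exact intervalIntegral.integral_Iic_sub_Iic hint.integrableOn hint.integrableOn
  have : 0 < ∫ t in a..b, gaussianPDFReal 0 1 t :=
    intervalIntegral.intervalIntegral_pos_of_pos (f := gaussianPDFReal 0 1)
      hint.intervalIntegrable (fun t => gaussianPDFReal_pos 0 1 t one_ne_zero) hab
  linarith

lemma differentiable_Phi : Differentiable ℝ Phi := fun x => (hasDerivAt_Phi x).differentiableAt

lemma differentiableAt_LK {K : ℝ} (hK : 0 < K) {s : ℝ} (hs : 0 < s) :
    DifferentiableAt ℝ (fun t => LK K t) s := by
  have hks : -K / s < K / s := by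
    apply div_lt_div_of_pos_right _ hs
    linarith
  have hne : Phi (K / s) - Phi (-K / s) ≠ 0 := sub_ne_zero_of_ne (Phi_lt hks).ne'
  have h1 : DifferentiableAt ℝ (fun t : ℝ => (K - t ^ 2) / t) s :=
    DifferentiableAt.div ((differentiableAt_const K).sub (differentiableAt_id.pow 2))
      differentiableAt_id hs.ne'
  have h2 : DifferentiableAt ℝ (fun t : ℝ => (-K - t ^ 2) / t) s :=
    DifferentiableAt.div ((differentiableAt_const (-K)).sub (differentiableAt_id.pow 2))
      differentiableAt_id hs.ne'
  have h3 : DifferentiableAt ℝ (fun t : ℝ => K / t) s :=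
    (differentiableAt_const K).div differentiableAt_id hs.ne'
  have h4 : DifferentiableAt ℝ (fun t : ℝ => -K / t) s :=
    (differentiableAt_const (-K)).div differentiableAt_id hs.ne'
  have he : DifferentiableAt ℝ (fun t : ℝ => Real.exp (t ^ 2 / 2)) s :=
    ((differentiableAt_id.pow 2).div_const 2).exp
  simp only [LK]
  exact DifferentiableAt.div
    (he.mul ((((differentiable_Phi _).comp s h1)).sub ((differentiable_Phi _).comp s h2)))
    (((differentiable_Phi _).comp s h3).sub ((differentiable_Phi _).comp s h4)) hne

lemma gaussianReal_eq_withDensity :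
    gaussianReal 0 1 = volume.withDensity
      (fun x => ((Real.toNNReal (gaussianPDFReal 0 1 x)) : ℝ≥0∞)) := by
  rw [gaussianReal_of_var_ne_zero 0 one_ne_zero]
  rfl

lemma pdf_mul_exp {t : ℝ} (x : ℝ) :
    gaussianPDFReal 0 1 x * Real.exp (t * x ^ 2)
      = (Real.sqrt (2 * Real.pi))⁻¹ * Real.exp (-(1/2 - t) * x ^ 2) := by
  simp only [gaussianPDFReal]
  rw [mul_assoc, ← Real.exp_add]
  norm_num
  ring_nf
  exact Or.inl trivial

lemma integrable_exp_sq_gauss {t : ℝ} (ht : t < 1/2) :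
    Integrable (fun x => Real.exp (t * x ^ 2)) (gaussianReal 0 1) := by
  rw [gaussianReal_eq_withDensity,
    integrable_withDensity_iff_integrable_smul
      ((measurable_gaussianPDFReal 0 1).real_toNNReal)]
  have : (fun x => (Real.toNNReal (gaussianPDFReal 0 1 x)) • Real.exp (t * x ^ 2))
      = fun x => (Real.sqrt (2 * Real.pi))⁻¹ * Real.exp (-(1/2 - t) * x ^ 2) := by
    funext x
    rw [NNReal.smul_def, smul_eq_mul, Real.coe_toNNReal _ (gaussianPDFReal_nonneg 0 1 x),
      pdf_mul_exp]
  rw [this]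
  exact (integrable_exp_neg_mul_sq (by linarith)).const_mul _

lemma integral_exp_sq_gauss {t : ℝ} (ht : t < 1/2) :
    ∫ x, Real.exp (t * x ^ 2) ∂(gaussianReal 0 1) = (Real.sqrt (1 - 2 * t))⁻¹ := by
  rw [gaussianReal_eq_withDensity,
    integral_withDensity_eq_integral_smul ((measurable_gaussianPDFReal 0 1).real_toNNReal)]
  have : (fun x => (Real.toNNReal (gaussianPDFReal 0 1 x)) • Real.exp (t * x ^ 2))
      = fun x => (Real.sqrt (2 * Real.pi))⁻¹ * Real.exp (-(1/2 - t) * x ^ 2) := by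
    funext x
    rw [NNReal.smul_def, smul_eq_mul, Real.coe_toNNReal _ (gaussianPDFReal_nonneg 0 1 x),
      pdf_mul_exp]
  rw [this, integral_const_mul, integral_gaussian]
  rw [← Real.sqrt_inv, ← Real.sqrt_mul (by positivity)]
  rw [← Real.sqrt_inv]
  congr 1
  have hπ := Real.pi_pos
  have h12 : (0:ℝ) < 1 - 2 * t := by linarith
  field_simp

lemma exp_sum_eq {d : ℕ} (t : ℝ) (v : Fin d → ℝ) :
    Real.exp (t * ∑ i, v i ^ 2) = ∏ i, Real.exp (t * v i ^ 2) := by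
  rw [← Real.exp_sum, Finset.mul_sum]

lemma integrable_exp_sq_pi {d : ℕ} {t : ℝ} (ht : t < 1/2) :
    Integrable (fun v : Fin d → ℝ => Real.exp (t * ∑ i, v i ^ 2))
      (Measure.pi fun _ : Fin d => gaussianReal 0 1) := by
  letI : MeasureSpace ℝ := ⟨gaussianReal 0 1⟩
  haveI : SigmaFinite (volume : Measure ℝ) := inferInstanceAs (SigmaFinite (gaussianReal 0 1))
  have h : Integrable (fun v : Fin d → ℝ => ∏ i, Real.exp (t * v i ^ 2)) volume :=
    Integrable.fintype_prod (f := fun _ x => Real.exp (t * x ^ 2))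
      fun _ => integrable_exp_sq_gauss ht
  rw [volume_pi] at h
  simp only [← exp_sum_eq] at h
  exact h

lemma integral_exp_sq_pi {d : ℕ} {t : ℝ} (ht : t < 1/2) :
    ∫ v, Real.exp (t * ∑ i, v i ^ 2) ∂(Measure.pi fun _ : Fin d => gaussianReal 0 1)
      = ((Real.sqrt (1 - 2 * t))⁻¹) ^ d := by
  letI : MeasureSpace ℝ := ⟨gaussianReal 0 1⟩
  haveI : SigmaFinite (volume : Measure ℝ) := inferInstanceAs (SigmaFinite (gaussianReal 0 1))
  have h := MeasureTheory.integral_fintype_prod_eq_prod (𝕜 := ℝ) (ι := Fin d)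
    (fun _ x => Real.exp (t * x ^ 2)) (μ := fun _ => gaussianReal 0 1)
  simp only [integral_exp_sq_gauss ht, Finset.prod_const, Finset.card_univ,
    Fintype.card_fin] at h
  simpa [exp_sum_eq] using h

lemma tail_ub (d : ℕ) {a : ℝ} (ha : 0 < a) :
    (Measure.pi fun _ : Fin d => gaussianReal 0 1)
      {v : Fin d → ℝ | (d : ℝ) * (1 + a) ^ 2 ≤ ∑ i, v i ^ 2}
      ≤ ENNReal.ofReal (Real.exp (-(d : ℝ) * a ^ 2 / 2)) := by
  set μd := Measure.pi fun _ : Fin d => gaussianReal 0 1 with hμd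
  have h1a : (0:ℝ) < 1 + a := by linarith
  have h1a2 : (1:ℝ) < (1 + a) ^ 2 := by nlinarith
  set t : ℝ := (1 - ((1 + a) ^ 2)⁻¹) / 2 with htdef
  have ht0 : 0 ≤ t := by
    have : ((1 + a) ^ 2)⁻¹ < 1 := inv_lt_one_of_one_lt₀ h1a2
    simp only [htdef]; linarith
  have ht2 : t < 1 / 2 := by
    have : 0 < ((1 + a) ^ 2)⁻¹ := by positivity
    simp only [htdef]; linarith
  have h12t : 1 - 2 * t = ((1 + a) ^ 2)⁻¹ := by simp only [htdef]; ring
  have hsq : (Real.sqrt (1 - 2 * t))⁻¹ = 1 + a := by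
    rw [h12t, Real.sqrt_inv, Real.sqrt_sq h1a.le, inv_inv]
  have hmgf : mgf (fun v : Fin d → ℝ => ∑ i, v i ^ 2) μd t = (1 + a) ^ d := by
    rw [mgf]
    simp only [hμd]
    rw [integral_exp_sq_pi ht2, hsq]
  have hcher := measure_ge_le_exp_mul_mgf (X := fun v : Fin d → ℝ => ∑ i, v i ^ 2)
    (μ := μd) ((d : ℝ) * (1 + a) ^ 2) ht0 (integrable_exp_sq_pi ht2)
  rw [hmgf] at hcher
  have hpow : (1 + a) ^ d = Real.exp ((d : ℝ) * Real.log (1 + a)) := by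
    rw [← Real.log_pow, Real.exp_log (by positivity)]
  have hlog : Real.log (1 + a) ≤ a := by
    have := Real.log_le_sub_one_of_pos h1a
    linarith
  have hexp : Real.exp (-t * ((d : ℝ) * (1 + a) ^ 2)) * (1 + a) ^ d
      ≤ Real.exp (-(d : ℝ) * a ^ 2 / 2) := by
    rw [hpow, ← Real.exp_add, Real.exp_le_exp]
    have hd : (0:ℝ) ≤ d := Nat.cast_nonneg d
    have key : -t * (1 + a) ^ 2 + Real.log (1 + a) ≤ -a ^ 2 / 2 := by
      have ht' : -t * (1 + a) ^ 2 = -((1 + a) ^ 2 - 1) / 2 := by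
        simp only [htdef]
        field_simp
      rw [ht']
      nlinarith
    nlinarith [mul_le_mul_of_nonneg_left key hd]
  rw [ENNReal.le_ofReal_iff_toReal_le (measure_ne_top _ _) (Real.exp_nonneg _)]
  exact hcher.trans hexp

lemma tail_lb (d : ℕ) {a : ℝ} (ha : 0 < a) (ha1 : a < 1) :
    (Measure.pi fun _ : Fin d => gaussianReal 0 1)
      {v : Fin d → ℝ | ∑ i, v i ^ 2 ≤ (d : ℝ) * (1 - a) ^ 2}
      ≤ ENNReal.ofReal (Real.exp (-(d : ℝ) * a ^ 2 / 2)) := by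
  set μd := Measure.pi fun _ : Fin d => gaussianReal 0 1 with hμd
  have h1a : (0:ℝ) < 1 - a := by linarith
  have h1a2 : (1 - a) ^ 2 < 1 := by nlinarith
  have h1a2' : (0:ℝ) < (1 - a) ^ 2 := by positivity
  set t : ℝ := (1 - ((1 - a) ^ 2)⁻¹) / 2 with htdef
  have hinv : 1 < ((1 - a) ^ 2)⁻¹ := (one_lt_inv₀ h1a2').mpr h1a2
  have ht0 : t ≤ 0 := by simp only [htdef]; linarith
  have ht2 : t < 1 / 2 := by linarith
  have h12t : 1 - 2 * t = ((1 - a) ^ 2)⁻¹ := by simp only [htdef]; ring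
  have hsq : (Real.sqrt (1 - 2 * t))⁻¹ = 1 - a := by
    rw [h12t, Real.sqrt_inv, Real.sqrt_sq h1a.le, inv_inv]
  have hmgf : mgf (fun v : Fin d → ℝ => ∑ i, v i ^ 2) μd t = (1 - a) ^ d := by
    rw [mgf]
    simp only [hμd]
    rw [integral_exp_sq_pi ht2, hsq]
  have hcher := measure_le_le_exp_mul_mgf (X := fun v : Fin d → ℝ => ∑ i, v i ^ 2)
    (μ := μd) ((d : ℝ) * (1 - a) ^ 2) ht0 (integrable_exp_sq_pi ht2)
  rw [hmgf] at hcher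
  have hpow : (1 - a) ^ d = Real.exp ((d : ℝ) * Real.log (1 - a)) := by
    rw [← Real.log_pow, Real.exp_log (by positivity)]
  have hlog : Real.log (1 - a) ≤ -a := by
    have := Real.log_le_sub_one_of_pos h1a
    linarith
  have hexp : Real.exp (-t * ((d : ℝ) * (1 - a) ^ 2)) * (1 - a) ^ d
      ≤ Real.exp (-(d : ℝ) * a ^ 2 / 2) := by
    rw [hpow, ← Real.exp_add, Real.exp_le_exp]
    have hd : (0:ℝ) ≤ d := Nat.cast_nonneg d
    have key : -t * (1 - a) ^ 2 + Real.log (1 - a) ≤ -a ^ 2 / 2 := by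
      have ht' : -t * (1 - a) ^ 2 = (1 - (1 - a) ^ 2) / 2 := by
        simp only [htdef]
        field_simp
        ring
      rw [ht']
      nlinarith
    nlinarith [mul_le_mul_of_nonneg_left key hd]
  rw [ENNReal.le_ofReal_iff_toReal_le (measure_ne_top _ _) (Real.exp_nonneg _)]
  exact hcher.trans hexp

lemma norm_tail (d : ℕ) {a : ℝ} (ha : 0 < a) :
    (Measure.pi fun _ : Fin d => gaussianReal 0 1)
      {v : Fin d → ℝ | a < |Real.sqrt (∑ i, v i ^ 2) / Real.sqrt d - 1|}
      ≤ ENNReal.ofReal (2 * Real.exp (-(d : ℝ) * a ^ 2 / 2)) := by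
  rcases Nat.eq_zero_or_pos d with hd | hd
  · subst hd
    refine le_trans (le_of_le_of_eq (measure_mono (Set.subset_univ _)) measure_univ) ?_
    norm_num
  have hdpos : (0:ℝ) < d := Nat.cast_pos.mpr hd
  have hsd : (0:ℝ) < Real.sqrt d := Real.sqrt_pos.mpr hdpos
  have hS : ∀ v : Fin d → ℝ, (0:ℝ) ≤ ∑ i, v i ^ 2 :=
    fun v => Finset.sum_nonneg fun i _ => sq_nonneg _
  have hupper : ∀ v : Fin d → ℝ, a < Real.sqrt (∑ i, v i ^ 2) / Real.sqrt d - 1 →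
      (d : ℝ) * (1 + a) ^ 2 ≤ ∑ i, v i ^ 2 := by
    intro v hv
    have h1 : (1 + a) * Real.sqrt d < Real.sqrt (∑ i, v i ^ 2) := by
      rw [← lt_div_iff₀ hsd]; linarith
    have h2 : ((1 + a) * Real.sqrt d) ^ 2 < Real.sqrt (∑ i, v i ^ 2) ^ 2 :=
      pow_lt_pow_left₀ h1 (by positivity) (by norm_num)
    rw [Real.sq_sqrt (hS v)] at h2
    have h3 : ((1 + a) * Real.sqrt d) ^ 2 = (1 + a) ^ 2 * d := by
      rw [mul_pow, Real.sq_sqrt hdpos.le]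
    nlinarith
  have hlower : a < 1 → ∀ v : Fin d → ℝ,
      a < -(Real.sqrt (∑ i, v i ^ 2) / Real.sqrt d - 1) →
      ∑ i, v i ^ 2 ≤ (d : ℝ) * (1 - a) ^ 2 := by
    intro ha1 v hv
    have h1 : Real.sqrt (∑ i, v i ^ 2) < (1 - a) * Real.sqrt d := by
      rw [← div_lt_iff₀ hsd]; linarith
    have h2 : Real.sqrt (∑ i, v i ^ 2) ^ 2 < ((1 - a) * Real.sqrt d) ^ 2 :=
      pow_lt_pow_left₀ h1 (Real.sqrt_nonneg _) (by norm_num)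
    rw [Real.sq_sqrt (hS v)] at h2
    have h3 : ((1 - a) * Real.sqrt d) ^ 2 = (1 - a) ^ 2 * d := by
      rw [mul_pow, Real.sq_sqrt hdpos.le]
    nlinarith
  rcases le_or_gt 1 a with ha1 | ha1
  · -- a ≥ 1 : lower branch impossible
    have hsub : {v : Fin d → ℝ | a < |Real.sqrt (∑ i, v i ^ 2) / Real.sqrt d - 1|}
        ⊆ {v : Fin d → ℝ | (d : ℝ) * (1 + a) ^ 2 ≤ ∑ i, v i ^ 2} := by
      intro v hv
      simp only [Set.mem_setOf_eq] at hv ⊢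
      rcases lt_abs.mp hv with h | h
      · exact hupper v h
      · exfalso
        have hσ : (0:ℝ) ≤ Real.sqrt (∑ i, v i ^ 2) / Real.sqrt d := by positivity
        linarith
    refine le_trans (le_trans (measure_mono hsub) (tail_ub d ha)) ?_
    apply ENNReal.ofReal_le_ofReal
    nlinarith [Real.exp_nonneg (-(d : ℝ) * a ^ 2 / 2)]
  · -- a < 1
    have hsub : {v : Fin d → ℝ | a < |Real.sqrt (∑ i, v i ^ 2) / Real.sqrt d - 1|}
        ⊆ {v : Fin d → ℝ | (d : ℝ) * (1 + a) ^ 2 ≤ ∑ i, v i ^ 2}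
          ∪ {v : Fin d → ℝ | ∑ i, v i ^ 2 ≤ (d : ℝ) * (1 - a) ^ 2} := by
      intro v hv
      simp only [Set.mem_setOf_eq] at hv
      rcases lt_abs.mp hv with h | h
      · exact Or.inl (hupper v h)
      · exact Or.inr (hlower ha1 v h)
    refine le_trans (measure_mono hsub) (le_trans (measure_union_le _ _) ?_)
    refine le_trans (add_le_add (tail_ub d ha) (tail_lb d ha ha1)) ?_
    rw [← ENNReal.ofReal_add (Real.exp_nonneg _) (Real.exp_nonneg _)]
    apply ENNReal.ofReal_le_ofReal
    linarith

/-- Let `β, K > 0`, `δ ∈ (0,1)`, `ε > 0`, `d ∈ ℕ`. Let `v` be a standard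
Gaussian vector in `ℝ^d` and `σ = ‖v‖₂/√d`. With `Δ = |L_K(β) − e^{β²/2}|` and
`L = β · sup_{|s−1| ≤ δ} |L_K′(βs)|`, assuming `0 < L < ∞`,
`P(|L_K(βσ) − e^{β²/2}| > ε) ≤ 2 exp(−(d/2)((ε−Δ)₊/L)²) + 2 exp(−dδ²/2)`. -/
theorem stmt8 (β K δ ε : ℝ) (hβ : 0 < β) (hK : 0 < K) (hδ : 0 < δ) (hδ1 : δ < 1)
    (hε : 0 < ε) (d : ℕ) (Δ L : ℝ)
    (hΔ : Δ = |LK K β - Real.exp (β ^ 2 / 2)|)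
    (hL : L = β * sSup ((fun s => |deriv (fun t => LK K t) (β * s)|) '' {s : ℝ | |s - 1| ≤ δ}))
    (hLpos : 0 < L)
    (hLfin : BddAbove ((fun s => |deriv (fun t => LK K t) (β * s)|) '' {s : ℝ | |s - 1| ≤ δ})) :
    (Measure.pi fun _ : Fin d => gaussianReal 0 1)
      {v : Fin d → ℝ |
        ε < |LK K (β * (Real.sqrt (∑ i, v i ^ 2) / Real.sqrt d)) - Real.exp (β ^ 2 / 2)|} ≤
    ENNReal.ofReal (2 * Real.exp (-((d : ℝ) / 2) * (max (ε - Δ) 0 / L) ^ 2) +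
      2 * Real.exp (-(d : ℝ) * δ ^ 2 / 2)) := by
  by_cases hcase : ε ≤ Δ
  · -- trivial case: the bound is at least 2
    rw [max_eq_right (by linarith)]
    refine le_trans (le_of_le_of_eq (measure_mono (Set.subset_univ _)) measure_univ) ?_
    rw [show (0:ℝ) / L = 0 by simp]
    norm_num
    nlinarith [Real.exp_nonneg (-((d : ℝ) * δ ^ 2) / 2)]
  push_neg at hcase
  set m : ℝ := (ε - Δ) / L with hm
  have hmpos : 0 < m := div_pos (by linarith) hLpos
  set C : ℝ := sSup ((fun s => |deriv (fun t => LK K t) (β * s)|) '' {s : ℝ | |s - 1| ≤ δ})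
    with hC
  -- the deterministic implication
  have hdet : ∀ v : Fin d → ℝ,
      ε < |LK K (β * (Real.sqrt (∑ i, v i ^ 2) / Real.sqrt d)) - Real.exp (β ^ 2 / 2)| →
      m < |Real.sqrt (∑ i, v i ^ 2) / Real.sqrt d - 1|
        ∨ δ < |Real.sqrt (∑ i, v i ^ 2) / Real.sqrt d - 1| := by
    intro v hv
    by_contra hcon
    push_neg at hcon
    obtain ⟨h1, h2⟩ := hcon
    set σ : ℝ := Real.sqrt (∑ i, v i ^ 2) / Real.sqrt d with hσ
    have hσδ : |σ - 1| ≤ δ := h2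
    have hσIcc : β * σ ∈ Set.Icc (β * (1 - δ)) (β * (1 + δ)) := by
      rcases abs_le.mp hσδ with ⟨hl, hr⟩
      constructor <;> nlinarith
    have hβIcc : β ∈ Set.Icc (β * (1 - δ)) (β * (1 + δ)) := by
      constructor <;> nlinarith
    have hdiff : ∀ x ∈ Set.Icc (β * (1 - δ)) (β * (1 + δ)),
        DifferentiableAt ℝ (fun t => LK K t) x := by
      intro x hx
      exact differentiableAt_LK hK (by nlinarith [hx.1])
    have hbound : ∀ x ∈ Set.Icc (β * (1 - δ)) (β * (1 + δ)),
        ‖deriv (fun t => LK K t) x‖ ≤ C := by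
      intro x hx
      rw [Real.norm_eq_abs]
      have hmem : |x / β - 1| ≤ δ := by
        have hx1 : 1 - δ ≤ x / β := (le_div_iff₀ hβ).mpr (by nlinarith [hx.1])
        have hx2 : x / β ≤ 1 + δ := (div_le_iff₀ hβ).mpr (by nlinarith [hx.2])
        rw [abs_le]
        constructor <;> linarith
      have : |deriv (fun t => LK K t) x|
          ∈ ((fun s => |deriv (fun t => LK K t) (β * s)|) '' {s : ℝ | |s - 1| ≤ δ}) := by
        refine ⟨x / β, hmem, ?_⟩
        simp only
        rw [show β * (x / β) = x by field_simp]
      exact le_csSup hLfin this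
    have key := Convex.norm_image_sub_le_of_norm_deriv_le hdiff hbound
      (convex_Icc _ _) hβIcc hσIcc
    rw [Real.norm_eq_abs, Real.norm_eq_abs] at key
    have hdist : |β * σ - β| = β * |σ - 1| := by
      rw [show β * σ - β = β * (σ - 1) by ring, abs_mul, abs_of_pos hβ]
    rw [hdist] at key
    have hLK : |LK K (β * σ) - LK K β| ≤ L * |σ - 1| := by
      calc |LK K (β * σ) - LK K β| ≤ C * (β * |σ - 1|) := key
        _ = L * |σ - 1| := by rw [hL]; ring
    have hfinal : |LK K (β * σ) - Real.exp (β ^ 2 / 2)| ≤ ε := by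
      have htri := abs_sub_le (LK K (β * σ)) (LK K β) (Real.exp (β ^ 2 / 2))
      have h3 : L * |σ - 1| ≤ L * m := by
        apply mul_le_mul_of_nonneg_left h1 hLpos.le
      have h4 : L * m = ε - Δ := by
        rw [hm]; field_simp
      rw [← hΔ] at htri
      linarith
    exact absurd hv (not_lt.mpr hfinal)
  -- measure estimate
  have hsub : {v : Fin d → ℝ |
      ε < |LK K (β * (Real.sqrt (∑ i, v i ^ 2) / Real.sqrt d)) - Real.exp (β ^ 2 / 2)|}
      ⊆ {v : Fin d → ℝ | m < |Real.sqrt (∑ i, v i ^ 2) / Real.sqrt d - 1|}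
        ∪ {v : Fin d → ℝ | δ < |Real.sqrt (∑ i, v i ^ 2) / Real.sqrt d - 1|} := by
    intro v hv
    exact hdet v hv
  refine le_trans (measure_mono hsub) (le_trans (measure_union_le _ _) ?_)
  refine le_trans (add_le_add (norm_tail d hmpos) (norm_tail d hδ)) ?_
  rw [← ENNReal.ofReal_add (by positivity) (by positivity)]
  apply le_of_eq
  congr 2
  rw [max_eq_left (by linarith), ← hm]
  ring
end

section
/- Let β > 0, n ∈ ℕ, m = ⌈n/2⌉ and λ = β²/2, and let χ be a standard Gaussian N(0,1) random variable. Then E[e^{βχ}] − E[P_n(βχ)] = Σ_{r=m}^∞ λ^r / r!. Moreover, if n > β², then E[e^{βχ}] − E[P_n(βχ)] ≤ ( e β² / n )^{n/2}. -/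
open MeasureTheory ProbabilityTheory

/-- `P_n(x) = Σ_{k=0}^{n−1} x^k / k!`, the degree-`(n−1)` Taylor polynomial of `e^x`. -/
noncomputable def Pn (n : ℕ) (x : ℝ) : ℝ := ∑ k ∈ Finset.range n, x ^ k / (Nat.factorial k)

namespace Stmt14Aux

open Real Filter
open scoped NNReal ENNReal

lemma integrable_pow_mul_exp' (k : ℕ) :
    Integrable (fun x : ℝ => x ^ k * Real.exp (-x ^ 2 / 2)) := by
  have h := integrable_rpow_mul_exp_neg_mul_sq (b := 1/2) (by norm_num) (s := (k : ℝ))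
    (lt_of_lt_of_le (by norm_num) (Nat.cast_nonneg k))
  refine h.congr (Filter.Eventually.of_forall fun x => ?_)
  simp only []
  rw [Real.rpow_natCast]
  ring_nf

lemma I0' : ∫ x : ℝ, Real.exp (-x ^ 2 / 2) = Real.sqrt (2 * π) := by
  have := integral_gaussian (1/2)
  simp only [neg_mul] at this
  rw [show (fun x : ℝ => Real.exp (-x ^ 2 / 2)) = fun x : ℝ => Real.exp (-(1/2 * x ^ 2)) by
    funext x; ring_nf]
  rw [this]
  rw [show π / (1/2) = 2 * π by ring]

lemma hasDerivAt_gauss (x : ℝ) :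
    HasDerivAt (fun x : ℝ => Real.exp (-x ^ 2 / 2)) (-x * Real.exp (-x ^ 2 / 2)) x := by
  have h1 : HasDerivAt (fun x : ℝ => -x ^ 2 / 2) (-x) x := by
    have := ((hasDerivAt_pow 2 x).neg).div_const 2
    simpa using this.congr_deriv (by ring)
  simpa [mul_comm] using h1.exp

lemma I1' : ∫ x : ℝ, x ^ 1 * Real.exp (-x ^ 2 / 2) = 0 := by
  have hd : ∀ x : ℝ, HasDerivAt (fun x : ℝ => -Real.exp (-x ^ 2 / 2))
      (x ^ 1 * Real.exp (-x ^ 2 / 2)) x := by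
    intro x
    exact (hasDerivAt_gauss x).neg.congr_deriv (by ring)
  have htop : Tendsto (fun x : ℝ => -Real.exp (-x ^ 2 / 2)) atTop (nhds 0) := by
    have h2 : Tendsto (fun x : ℝ => -x ^ 2 / 2) atTop atBot := by
      apply Tendsto.atBot_div_const (by norm_num)
      exact tendsto_neg_atTop_atBot.comp (tendsto_pow_atTop (by norm_num))
    simpa using (Real.tendsto_exp_atBot.comp h2).neg
  have hbot : Tendsto (fun x : ℝ => -Real.exp (-x ^ 2 / 2)) atBot (nhds 0) := by
    have h2 : Tendsto (fun x : ℝ => -x ^ 2 / 2) atBot atBot := by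
      apply Tendsto.atBot_div_const (by norm_num)
      refine tendsto_neg_atTop_atBot.comp ?_
      have : Tendsto (fun x : ℝ => |x| ^ 2) atBot atTop :=
        (tendsto_pow_atTop (by norm_num)).comp tendsto_abs_atBot_atTop
      exact this.congr (fun x => sq_abs x)
    simpa using (Real.tendsto_exp_atBot.comp h2).neg
  have := MeasureTheory.integral_of_hasDerivAt_of_tendsto hd
    (integrable_pow_mul_exp' 1) hbot htop
  simpa using this

lemma Irec (k : ℕ) : ∫ x : ℝ, x ^ (k + 2) * Real.exp (-x ^ 2 / 2)
    = (k + 1 : ℝ) * ∫ x : ℝ, x ^ k * Real.exp (-x ^ 2 / 2) := by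
  have h := MeasureTheory.integral_mul_deriv_eq_deriv_mul_of_integrable
    (u := fun x : ℝ => x ^ (k + 1)) (v := fun x : ℝ => Real.exp (-x ^ 2 / 2))
    (u' := fun x : ℝ => (k + 1 : ℝ) * x ^ k) (v' := fun x : ℝ => -x * Real.exp (-x ^ 2 / 2))
    (fun x _ => by simpa using hasDerivAt_pow (k+1) x)
    (fun x _ => hasDerivAt_gauss x)
    ((integrable_pow_mul_exp' (k + 2)).neg.congr
      (Filter.Eventually.of_forall fun x => by simp [Pi.mul_apply]; ring))
    (((integrable_pow_mul_exp' k).const_mul (k + 1 : ℝ)).congr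
      (Filter.Eventually.of_forall fun x => by simp [Pi.mul_apply]; ring))
    ((integrable_pow_mul_exp' (k + 1)).congr
      (Filter.Eventually.of_forall fun x => by simp [Pi.mul_apply]))
  have h2 : ∫ x : ℝ, x ^ (k + 1) * (-x * Real.exp (-x ^ 2 / 2))
      = -∫ x : ℝ, x ^ (k + 2) * Real.exp (-x ^ 2 / 2) := by
    rw [← integral_neg]
    congr 1; funext x; ring
  rw [h2] at h
  have h3 : ∫ x : ℝ, (k + 1 : ℝ) * x ^ k * Real.exp (-x ^ 2 / 2)
      = (k + 1 : ℝ) * ∫ x : ℝ, x ^ k * Real.exp (-x ^ 2 / 2) := by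
    rw [← integral_const_mul]
    congr 1; funext x; ring
  have := neg_injective h
  rw [this, ← h3]

lemma I_even (r : ℕ) : ∫ x : ℝ, x ^ (2 * r) * Real.exp (-x ^ 2 / 2)
    = Real.sqrt (2 * π) * (Nat.factorial (2 * r) / (2 ^ r * Nat.factorial r)) := by
  induction r with
  | zero => simpa using I0'
  | succ r ih =>
    have h : 2 * (r + 1) = 2 * r + 2 := by ring
    rw [h, Irec (2 * r), ih]
    have h1 : (Nat.factorial (2 * (r + 1)) : ℝ) =
        (2 * r + 2) * (2 * r + 1) * Nat.factorial (2 * r) := by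
      rw [show 2 * (r + 1) = (2 * r + 1) + 1 by ring, Nat.factorial_succ, Nat.factorial_succ]
      push_cast; ring
    have h2 : (Nat.factorial (r + 1) : ℝ) = (r + 1) * Nat.factorial r := by
      rw [Nat.factorial_succ]; push_cast; ring
    rw [show 2*r+2 = 2*(r+1) by ring, h1, h2]
    have hf : (Nat.factorial r : ℝ) ≠ 0 := Nat.cast_ne_zero.2 (Nat.factorial_ne_zero r)
    have hr1 : (r : ℝ) + 1 ≠ 0 := by positivity
    field_simp
    push_cast; ring

lemma I_odd (r : ℕ) : ∫ x : ℝ, x ^ (2 * r + 1) * Real.exp (-x ^ 2 / 2) = 0 := by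
  induction r with
  | zero => simpa using I1'
  | succ r ih =>
    have h : 2 * (r + 1) + 1 = (2 * r + 1) + 2 := by ring
    rw [h, Irec (2 * r + 1), ih, mul_zero]

lemma integral_gauss' (g : ℝ → ℝ) :
    ∫ x, g x ∂(gaussianReal 0 1) = ∫ x, gaussianPDFReal 0 1 x * g x := by
  rw [gaussianReal_of_var_ne_zero 0 one_ne_zero]
  have hd : gaussianPDF 0 1 = fun x => ((Real.toNNReal (gaussianPDFReal 0 1 x) : ℝ≥0) : ℝ≥0∞) :=
    rfl
  rw [hd, integral_withDensity_eq_integral_smul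
    ((measurable_gaussianPDFReal 0 1).real_toNNReal) g]
  congr 1
  funext x
  rw [NNReal.smul_def, Real.coe_toNNReal _ (gaussianPDFReal_nonneg 0 1 x)]
  rfl

lemma integrable_gauss' (g : ℝ → ℝ)
    (h : Integrable (fun x => gaussianPDFReal 0 1 x * g x)) :
    Integrable g (gaussianReal 0 1) := by
  rw [gaussianReal_of_var_ne_zero 0 one_ne_zero]
  have hd : gaussianPDF 0 1 = fun x => ((Real.toNNReal (gaussianPDFReal 0 1 x) : ℝ≥0) : ℝ≥0∞) :=
    rfl
  rw [hd, integrable_withDensity_iff_integrable_smul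
    ((measurable_gaussianPDFReal 0 1).real_toNNReal)]
  refine h.congr (Filter.Eventually.of_forall fun x => ?_)
  simp only [NNReal.smul_def, Real.coe_toNNReal _ (gaussianPDFReal_nonneg 0 1 x), smul_eq_mul]

lemma pdf_eq (x : ℝ) :
    gaussianPDFReal 0 1 x = (Real.sqrt (2 * π))⁻¹ * Real.exp (-x ^ 2 / 2) := by
  simp [gaussianPDFReal]

lemma sqrt_two_pi_pos : 0 < Real.sqrt (2 * π) := Real.sqrt_pos.2 (by positivity)

lemma gauss_mgf (β : ℝ) :
    ∫ x, Real.exp (β * x) ∂(gaussianReal 0 1) = Real.exp (β ^ 2 / 2) := by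
  rw [integral_gauss']
  have key : ∀ x : ℝ, gaussianPDFReal 0 1 x * Real.exp (β * x)
      = Real.exp (β ^ 2 / 2) * gaussianPDFReal β 1 x := by
    intro x
    rw [pdf_eq]
    unfold gaussianPDFReal
    simp only [NNReal.coe_one, mul_one]
    rw [mul_assoc, ← Real.exp_add, mul_comm (Real.exp (β^2/2)), mul_assoc, ← Real.exp_add]
    congr 2
    ring
  simp_rw [key]
  rw [integral_const_mul, integral_gaussianPDFReal_eq_one β one_ne_zero, mul_one]

lemma gauss_moment_even (r : ℕ) :
    ∫ x, x ^ (2 * r) ∂(gaussianReal 0 1)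
      = Nat.factorial (2 * r) / (2 ^ r * Nat.factorial r) := by
  rw [integral_gauss']
  have : ∀ x : ℝ, gaussianPDFReal 0 1 x * x ^ (2*r)
      = (√(2 * π))⁻¹ * (x ^ (2*r) * Real.exp (-x ^ 2 / 2)) := fun x => by rw [pdf_eq]; ring
  simp_rw [this]
  rw [integral_const_mul, I_even, inv_mul_cancel_left₀ (ne_of_gt sqrt_two_pi_pos)]

lemma gauss_moment_odd (r : ℕ) :
    ∫ x, x ^ (2 * r + 1) ∂(gaussianReal 0 1) = 0 := by
  rw [integral_gauss']
  have : ∀ x : ℝ, gaussianPDFReal 0 1 x * x ^ (2*r+1)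
      = (√(2 * π))⁻¹ * (x ^ (2*r+1) * Real.exp (-x ^ 2 / 2)) := fun x => by rw [pdf_eq]; ring
  simp_rw [this]
  rw [integral_const_mul, I_odd, mul_zero]

lemma gauss_integrable_pow (k : ℕ) :
    Integrable (fun x => x ^ k) (gaussianReal 0 1) := by
  apply integrable_gauss'
  refine ((integrable_pow_mul_exp' k).const_mul ((Real.sqrt (2 * π))⁻¹)).congr
    (Filter.Eventually.of_forall fun x => ?_)
  simp only []
  rw [pdf_eq]
  ring

lemma ceil_half (n : ℕ) : ⌈(n : ℝ) / 2⌉₊ = (n + 1) / 2 := by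
  rcases Nat.even_or_odd n with ⟨q, hq⟩ | ⟨q, hq⟩
  · subst hq
    rw [show ((q + q : ℕ) : ℝ) / 2 = (q : ℝ) by push_cast; ring, Nat.ceil_natCast]
    omega
  · subst hq
    have h : ⌈((2 * q + 1 : ℕ) : ℝ) / 2⌉₊ = q + 1 := by
      rw [Nat.ceil_eq_iff (by omega)]
      refine ⟨by push_cast; linarith, by push_cast; linarith⟩
    rw [h]
    omega

lemma sum_even_aux (c d : ℕ → ℝ) (hc : ∀ r, c (2 * r) = d r) (hodd : ∀ r, c (2 * r + 1) = 0)
    (n : ℕ) : ∑ k ∈ Finset.range n, c k = ∑ r ∈ Finset.range ((n + 1) / 2), d r := by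
  induction n with
  | zero => simp
  | succ n ih =>
    rw [Finset.sum_range_succ, ih]
    rcases Nat.even_or_odd n with ⟨q, hq⟩ | ⟨q, hq⟩
    · have h1 : (n + 1) / 2 = q := by omega
      have h2 : (n + 2) / 2 = q + 1 := by omega
      rw [h1, h2, Finset.sum_range_succ, show n = 2 * q by omega, hc]
    · have h1 : (n + 1) / 2 = q + 1 := by omega
      have h2 : (n + 2) / 2 = q + 1 := by omega
      rw [h1, h2, show n = 2 * q + 1 by omega, hodd, add_zero]

lemma gauss_Pn (β : ℝ) (n : ℕ) :
    ∫ x, Pn n (β * x) ∂(gaussianReal 0 1)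
      = ∑ r ∈ Finset.range ⌈(n : ℝ) / 2⌉₊, (β ^ 2 / 2) ^ r / (Nat.factorial r) := by
  unfold Pn
  rw [integral_finset_sum _ (fun k _ => ?_)]
  swap
  · refine ((gauss_integrable_pow k).const_mul (β ^ k / Nat.factorial k)).congr
      (Filter.Eventually.of_forall fun x => ?_)
    simp only []
    rw [mul_pow]
    ring
  have hterm : ∀ k, ∫ x, (β * x) ^ k / (Nat.factorial k) ∂(gaussianReal 0 1)
      = (β ^ k / Nat.factorial k) * ∫ x, x ^ k ∂(gaussianReal 0 1) := by
    intro k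
    rw [← integral_const_mul]
    congr 1; funext x; rw [mul_pow]; ring
  simp_rw [hterm]
  rw [ceil_half]
  refine sum_even_aux _ _ (fun r => ?_) (fun r => ?_) n
  · rw [gauss_moment_even]
    have h2 : (Nat.factorial (2 * r) : ℝ) ≠ 0 := Nat.cast_ne_zero.2 (Nat.factorial_ne_zero _)
    have h3 : (Nat.factorial r : ℝ) ≠ 0 := Nat.cast_ne_zero.2 (Nat.factorial_ne_zero _)
    rw [div_pow, pow_mul]
    field_simp
  · rw [gauss_moment_odd, mul_zero]

lemma exp_tsum (y : ℝ) : Real.exp y = ∑' k : ℕ, y ^ k / (Nat.factorial k) := by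
  rw [Real.exp_eq_exp_ℝ, NormedSpace.exp_eq_tsum_div]

lemma exp_sub_partial (y : ℝ) (m : ℕ) :
    Real.exp y - ∑ r ∈ Finset.range m, y ^ r / (Nat.factorial r)
      = ∑' j : ℕ, y ^ (m + j) / (Nat.factorial (m + j)) := by
  have h := Summable.sum_add_tsum_nat_add m (Real.summable_pow_div_factorial y)
  rw [exp_tsum y, ← h]
  simp_rw [add_comm m]
  ring

lemma tail_bound (β : ℝ) (hβ : 0 < β) (n : ℕ) (hn : β ^ 2 < n) :
    ∑' j : ℕ, (β ^ 2 / 2) ^ (⌈(n : ℝ) / 2⌉₊ + j) / (Nat.factorial (⌈(n : ℝ) / 2⌉₊ + j))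
      ≤ (Real.exp 1 * β ^ 2 / n) ^ ((n : ℝ) / 2) := by
  set m : ℕ := ⌈(n : ℝ) / 2⌉₊ with hm
  set s : ℝ := (n : ℝ) / 2 with hs
  set θ : ℝ := (n : ℝ) / β ^ 2 with hθdef
  have hn0 : (0 : ℝ) < n := lt_trans (by positivity) hn
  have hθ1 : 1 < θ := (one_lt_div (by positivity)).2 hn
  have hθ0 : 0 < θ := lt_trans one_pos hθ1
  have hs0 : 0 ≤ s := by positivity
  have hlam : β ^ 2 / 2 = s / θ := by
    rw [hs, hθdef]
    field_simp
  have hsm : s ≤ (m : ℝ) := Nat.le_ceil _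
  have hpt : ∀ j : ℕ, (β ^ 2 / 2) ^ (m + j) / (Nat.factorial (m + j))
      ≤ θ ^ (-s) * (s ^ (m + j) / (Nat.factorial (m + j))) := by
    intro j
    have hfac : (0 : ℝ) < Nat.factorial (m + j) := by exact_mod_cast Nat.factorial_pos _
    have hexp : θ ^ s ≤ θ ^ ((m + j : ℕ) : ℝ) := by
      apply Real.rpow_le_rpow_of_exponent_le hθ1.le
      push_cast
      have : (0:ℝ) ≤ j := Nat.cast_nonneg j
      linarith
    have key : s ^ (m + j) / θ ^ ((m + j : ℕ) : ℝ) ≤ s ^ (m + j) / θ ^ s :=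
      div_le_div_of_nonneg_left (pow_nonneg hs0 _) (Real.rpow_pos_of_pos hθ0 _) hexp
    calc (β ^ 2 / 2) ^ (m + j) / (Nat.factorial (m + j))
        = (s ^ (m + j) / θ ^ ((m + j : ℕ) : ℝ)) / (Nat.factorial (m + j)) := by
          rw [hlam, div_pow, Real.rpow_natCast]
      _ ≤ (s ^ (m + j) / θ ^ s) / (Nat.factorial (m + j)) := by
          apply div_le_div_of_nonneg_right key hfac.le
      _ = θ ^ (-s) * (s ^ (m + j) / (Nat.factorial (m + j))) := by
          rw [Real.rpow_neg hθ0.le]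
          ring
  have hsum_s : Summable (fun j : ℕ => s ^ (m + j) / (Nat.factorial (m + j))) := by
    refine ((summable_nat_add_iff m).2 (Real.summable_pow_div_factorial s)).congr fun j => ?_
    rw [add_comm]
  have hsum_g : Summable (fun j : ℕ => θ ^ (-s) * (s ^ (m + j) / (Nat.factorial (m + j)))) :=
    hsum_s.mul_left _
  have hsum_f : Summable (fun j : ℕ => (β ^ 2 / 2) ^ (m + j) / (Nat.factorial (m + j))) := by
    refine ((summable_nat_add_iff m).2 (Real.summable_pow_div_factorial (β ^ 2 / 2))).congr
      fun j => ?_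
    rw [add_comm]
  calc ∑' j : ℕ, (β ^ 2 / 2) ^ (m + j) / (Nat.factorial (m + j))
      ≤ ∑' j : ℕ, θ ^ (-s) * (s ^ (m + j) / (Nat.factorial (m + j))) :=
        Summable.tsum_le_tsum hpt hsum_f hsum_g
    _ = θ ^ (-s) * ∑' j : ℕ, s ^ (m + j) / (Nat.factorial (m + j)) := tsum_mul_left
    _ ≤ θ ^ (-s) * Real.exp s := by
        apply mul_le_mul_of_nonneg_left ?_ (Real.rpow_nonneg hθ0.le _)
        have h := Summable.sum_add_tsum_nat_add m (Real.summable_pow_div_factorial s)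
        have hE : Real.exp s = ∑' k : ℕ, s ^ k / (Nat.factorial k) := by
          rw [Real.exp_eq_exp_ℝ, NormedSpace.exp_eq_tsum_div]
        have hnn : 0 ≤ ∑ i ∈ Finset.range m, s ^ i / (Nat.factorial i) :=
          Finset.sum_nonneg fun i _ => by positivity
        have h2 : ∑' j : ℕ, s ^ (m + j) / (Nat.factorial (m + j))
            = ∑' j : ℕ, s ^ (j + m) / (Nat.factorial (j + m)) := by
          congr 1; funext j; rw [add_comm]
        rw [h2]
        linarith [h, hE ▸ h]
    _ = (Real.exp 1 * β ^ 2 / n) ^ ((n : ℝ) / 2) := by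
        have he : Real.exp 1 * β ^ 2 / n = Real.exp 1 / θ := by
          rw [hθdef]; field_simp
        rw [he, Real.div_rpow (Real.exp_pos 1).le hθ0.le, ← Real.exp_one_rpow s,
          Real.rpow_neg hθ0.le, ← hs, div_eq_mul_inv, mul_comm]

end Stmt14Aux

/-- Let `β > 0`, `n ∈ ℕ`, `m = ⌈n/2⌉`, `λ = β²/2`, `χ ~ N(0,1)`. Then
`E[e^{βχ}] − E[P_n(βχ)] = Σ_{r=m}^∞ λ^r / r!`; moreover, if `n > β²`, then
`E[e^{βχ}] − E[P_n(βχ)] ≤ (eβ²/n)^{n/2}`. -/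
theorem stmt14 (β : ℝ) (hβ : 0 < β) (n : ℕ) :
    (∫ x, Real.exp (β * x) ∂(gaussianReal 0 1)) -
        (∫ x, Pn n (β * x) ∂(gaussianReal 0 1)) =
      (∑' j : ℕ, (β ^ 2 / 2) ^ (⌈(n : ℝ) / 2⌉₊ + j) /
        (Nat.factorial (⌈(n : ℝ) / 2⌉₊ + j))) ∧
    (β ^ 2 < n →
      (∫ x, Real.exp (β * x) ∂(gaussianReal 0 1)) -
          (∫ x, Pn n (β * x) ∂(gaussianReal 0 1)) ≤
        (Real.exp 1 * β ^ 2 / n) ^ ((n : ℝ) / 2)) := by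
  have heq : (∫ x, Real.exp (β * x) ∂(gaussianReal 0 1)) -
      (∫ x, Pn n (β * x) ∂(gaussianReal 0 1)) =
      ∑' j : ℕ, (β ^ 2 / 2) ^ (⌈(n : ℝ) / 2⌉₊ + j) /
        (Nat.factorial (⌈(n : ℝ) / 2⌉₊ + j)) := by
    rw [Stmt14Aux.gauss_mgf β, Stmt14Aux.gauss_Pn β n]
    exact Stmt14Aux.exp_sub_partial (β ^ 2 / 2) _
  refine ⟨heq, fun hn => ?_⟩
  rw [heq]
  exact Stmt14Aux.tail_bound β hβ n hn
end

section
/- For each d ∈ ℕ let X_d and Y_d be d×d real matrices. Assume that ‖X_d − Y_d‖ → 0 as d → ∞, and that for every q ∈ ℕ there exists m_q ∈ [0, ∞) with (1/d) · Tr( (Y_d Y_dᵀ)^q ) → m_q as d → ∞. Then for every q ∈ ℕ: (1/d) · Tr( (X_d X_dᵀ)^q ) → m_q as d → ∞. -/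
open Matrix Filter

set_option linter.unusedSectionVars false
set_option maxHeartbeats 1000000

/-- Descending singular values: `sVal M i` is the `(i+1)`-st largest singular value of `M`. -/
noncomputable def sVal {d : ℕ} (M : Matrix (Fin d) (Fin d) ℝ) (i : Fin d) : ℝ :=
  Real.sqrt ((Matrix.isHermitian_mul_conjTranspose_self M).eigenvalues
    (Tuple.sort (Matrix.isHermitian_mul_conjTranspose_self M).eigenvalues i.rev))

/-- The operator norm (largest singular value) of `M`. -/
noncomputable def sOne {d : ℕ} (M : Matrix (Fin d) (Fin d) ℝ) : ℝ := ⨆ i, sVal M i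

section helper
open Finset

section aux
variable {n : Type*} [Fintype n] [DecidableEq n]

lemma trace_expand (M N : Matrix n n ℝ) :
    (M * N).trace = ∑ p : n × n, M p.1 p.2 * N p.2 p.1 := by
  rw [Matrix.trace, Fintype.sum_prod_type]
  simp [Matrix.diag, Matrix.mul_apply]

lemma trace_sq_self (M : Matrix n n ℝ) :
    (M * Mᵀ).trace = ∑ p : n × n, (M p.1 p.2) ^ 2 := by
  rw [trace_expand]; simp [sq]

lemma trace_self_nonneg' (M : Matrix n n ℝ) : 0 ≤ (M * Mᵀ).trace := by
  rw [trace_sq_self]; positivity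

lemma trace_CS (M N : Matrix n n ℝ) :
    |(M * N).trace| ≤ Real.sqrt ((M * Mᵀ).trace * (N * Nᵀ).trace) := by
  have key : ∀ P Q : Matrix n n ℝ, (P * Q).trace ≤ Real.sqrt ((P * Pᵀ).trace * (Q * Qᵀ).trace) := by
    intro P Q
    rw [trace_expand, trace_sq_self, trace_sq_self]
    calc ∑ p : n × n, P p.1 p.2 * Q p.2 p.1
        ≤ Real.sqrt (∑ p : n × n, (P p.1 p.2) ^ 2) *
          Real.sqrt (∑ p : n × n, (Q p.2 p.1) ^ 2) :=
          Real.sum_mul_le_sqrt_mul_sqrt _ _ _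
      _ = Real.sqrt ((∑ p : n × n, (P p.1 p.2) ^ 2) * ∑ p : n × n, (Q p.2 p.1) ^ 2) :=
          (Real.sqrt_mul (by positivity) _).symm
      _ = Real.sqrt ((∑ p : n × n, (P p.1 p.2) ^ 2) * ∑ p : n × n, (Q p.1 p.2) ^ 2) := by
          congr 2
          exact Fintype.sum_equiv (Equiv.prodComm n n) _ _ (fun p => rfl)
  rw [abs_le]
  refine ⟨?_, key M N⟩
  have h := key (-M) N
  rw [Matrix.neg_mul, trace_neg, Matrix.neg_mul, Matrix.transpose_neg, Matrix.mul_neg, neg_neg]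
    at h
  linarith

lemma ct_eq (M : Matrix n n ℝ) : Mᴴ = Mᵀ := by
  ext i j; simp [Matrix.conjTranspose_apply]

lemma psd_trace_nonneg {P : Matrix n n ℝ} (hP : P.PosSemidef) : 0 ≤ P.trace := by
  obtain ⟨B, hB⟩ := (by open scoped MatrixOrder in
    exact CStarAlgebra.nonneg_iff_eq_star_mul_self.mp hP.nonneg : ∃ B : Matrix n n ℝ, P = star B * B)
  rw [Matrix.star_eq_conjTranspose] at hB; subst hB
  rw [ct_eq, Matrix.trace_mul_comm]
  exact trace_self_nonneg' B

lemma psd_trace_mul_nonneg {P Q : Matrix n n ℝ} (hP : P.PosSemidef) (hQ : Q.PosSemidef) :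
    0 ≤ (P * Q).trace := by
  obtain ⟨C, hC⟩ := (by open scoped MatrixOrder in
    exact CStarAlgebra.nonneg_iff_eq_star_mul_self.mp hP.nonneg : ∃ C : Matrix n n ℝ, P = star C * C)
  rw [Matrix.star_eq_conjTranspose] at hC; subst hC
  rw [Matrix.mul_assoc, Matrix.trace_mul_comm]
  exact psd_trace_nonneg (hQ.mul_mul_conjTranspose_same C)

lemma psd_smul {P : Matrix n n ℝ} (hP : P.PosSemidef) {c : ℝ} (hc : 0 ≤ c) :
    (c • P).PosSemidef := by
  refine Matrix.PosSemidef.of_dotProduct_mulVec_nonneg ?_ fun x => ?_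
  · unfold Matrix.IsHermitian
    rw [conjTranspose_smul, hP.1.eq]
    congr 1
  · rw [smul_mulVec, dotProduct_smul, smul_eq_mul]
    exact mul_nonneg hc (hP.dotProduct_mulVec_nonneg x)

lemma trace_mul_le_smul {P Q : Matrix n n ℝ} {c : ℝ}
    (hc : (c • (1 : Matrix n n ℝ) - P).PosSemidef) (hQ : Q.PosSemidef) :
    (P * Q).trace ≤ c * Q.trace := by
  have h := psd_trace_mul_nonneg hc hQ
  rw [Matrix.sub_mul, Matrix.smul_mul, Matrix.one_mul, trace_sub, trace_smul] at h
  simpa using h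

lemma telescope (A B : Matrix n n ℝ) (q : ℕ) :
    A ^ q - B ^ q = ∑ j ∈ Finset.range q, A ^ j * (A - B) * B ^ (q - 1 - j) := by
  induction q with
  | zero => simp
  | succ q ih =>
    have key : A ^ (q+1) - B ^ (q+1) = (A ^ q - B ^ q) * B + A ^ q * (A - B) * B ^ (q+1-1-q) := by
      simp only [Nat.add_sub_cancel, Nat.sub_self, pow_zero, Matrix.mul_one]
      rw [Matrix.sub_mul, Matrix.mul_sub]
      simp only [pow_succ]
      abel
    rw [key, Finset.sum_range_succ]
    congr 1
    rw [ih, Finset.sum_mul]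
    refine Finset.sum_congr rfl fun j hj => ?_
    rw [Finset.mem_range] at hj
    have he : q + 1 - 1 - j = (q - 1 - j) + 1 := by omega
    rw [he, pow_succ, ← Matrix.mul_assoc]

end aux

section deriv
variable {n : Type*} [Fintype n] [DecidableEq n]

attribute [local instance] Matrix.frobeniusNormedAddCommGroup Matrix.frobeniusNormedRing
  Matrix.frobeniusNormedAlgebra

lemma hasDerivAt_mat_pow (A Δ : Matrix n n ℝ) (q : ℕ) (t : ℝ) :
    HasDerivAt (fun s : ℝ => (A + s • Δ) ^ q)
      (∑ j ∈ Finset.range q, (A + t • Δ) ^ j * Δ * (A + t • Δ) ^ (q - 1 - j)) t := by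
  have hM : HasDerivAt (fun s : ℝ => A + s • Δ) Δ t := by
    have h1 := ((hasDerivAt_id t).smul_const Δ).const_add A
    rw [one_smul] at h1
    exact h1
  induction q with
  | zero =>
    simp only [pow_zero, Finset.range_zero, Finset.sum_empty]
    exact hasDerivAt_const t (1 : Matrix n n ℝ)
  | succ q ih =>
    have h := ih.mul hM
    have heq : (∑ j ∈ Finset.range q, (A + t • Δ) ^ j * Δ * (A + t • Δ) ^ (q - 1 - j))
          * (A + t • Δ) + (A + t • Δ) ^ q * Δ
        = ∑ j ∈ Finset.range (q+1), (A + t • Δ) ^ j * Δ * (A + t • Δ) ^ (q + 1 - 1 - j) := by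
      rw [Finset.sum_range_succ, Finset.sum_mul]
      congr 1
      · refine Finset.sum_congr rfl fun j hj => ?_
        rw [Finset.mem_range] at hj
        have he : q + 1 - 1 - j = (q - 1 - j) + 1 := by omega
        rw [he, pow_succ, ← Matrix.mul_assoc]
      · simp
    rw [← heq]
    have hfun : (fun s : ℝ => (A + s • Δ) ^ (q + 1))
        = fun s : ℝ => (A + s • Δ) ^ q * (A + s • Δ) := by
      funext s; rw [pow_succ]
    rw [hfun]
    exact h

lemma trace_pow_mono {A B : Matrix n n ℝ} (hA : A.PosSemidef) (hBA : (B - A).PosSemidef)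
    (q : ℕ) : (A ^ q).trace ≤ (B ^ q).trace := by
  set Δ := B - A with hΔ
  set L : Matrix n n ℝ →ₗ[ℝ] ℝ := Matrix.traceLinearMap n ℝ ℝ
  have hf : ∀ t : ℝ, HasDerivAt (fun s : ℝ => ((A + s • Δ) ^ q).trace)
      ((∑ j ∈ Finset.range q, (A + t • Δ) ^ j * Δ * (A + t • Δ) ^ (q - 1 - j)).trace) t := by
    intro t
    have := (L.toContinuousLinearMap.hasFDerivAt).comp_hasDerivAt t
      (hasDerivAt_mat_pow A Δ q t)
    exact this
  have hpsd : ∀ t ∈ Set.Icc (0:ℝ) 1, (A + t • Δ).PosSemidef := by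
    intro t ht
    exact hA.add (psd_smul hBA ht.1)

  have hderiv_nonneg : ∀ t ∈ Set.Icc (0:ℝ) 1,
      0 ≤ (∑ j ∈ Finset.range q, (A + t • Δ) ^ j * Δ * (A + t • Δ) ^ (q - 1 - j)).trace := by
    intro t ht
    rw [Matrix.trace_sum]
    refine Finset.sum_nonneg fun j hj => ?_
    rw [Matrix.trace_mul_cycle, ← pow_add]
    exact psd_trace_mul_nonneg ((hpsd t ht).pow _) hBA
  have hdiff : Differentiable ℝ (fun s : ℝ => ((A + s • Δ) ^ q).trace) :=
    fun t => (hf t).differentiableAt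
  have hmono := monotoneOn_of_deriv_nonneg (convex_Icc (0:ℝ) 1)
    hdiff.continuous.continuousOn hdiff.differentiableOn ?hd
  case hd =>
    intro x hx
    rw [interior_Icc] at hx
    rw [(hf x).deriv]
    exact hderiv_nonneg x (Set.Ioo_subset_Icc_self hx)
  have h01 := hmono (Set.left_mem_Icc.mpr zero_le_one) (Set.right_mem_Icc.mpr zero_le_one)
    zero_le_one
  simpa [hΔ] using h01

end deriv

lemma sOne_nonneg {d : ℕ} (E : Matrix (Fin d) (Fin d) ℝ) : 0 ≤ sOne E := by
  unfold sOne
  rcases isEmpty_or_nonempty (Fin d) with h | h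
  · rw [iSup_of_empty']
    simp [Real.sSup_empty]
  · obtain ⟨i⟩ := h
    have hb := le_ciSup (Set.Finite.bddAbove (Set.finite_range (sVal E))) i
    refine le_trans ?_ hb
    unfold sVal
    exact Real.sqrt_nonneg _

lemma eig_le_sOne_sq {d : ℕ} (E : Matrix (Fin d) (Fin d) ℝ) (i : Fin d) :
    (Matrix.isHermitian_mul_conjTranspose_self E).eigenvalues i ≤ (sOne E) ^ 2 := by
  set h := Matrix.isHermitian_mul_conjTranspose_self E
  have h0 : 0 ≤ h.eigenvalues i := Matrix.eigenvalues_self_mul_conjTranspose_nonneg E i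
  have hle : Real.sqrt (h.eigenvalues i) ≤ sOne E := by
    have hb : BddAbove (Set.range (sVal E)) := Set.Finite.bddAbove (Set.finite_range _)
    have := le_ciSup hb (Fin.rev ((Tuple.sort h.eigenvalues)⁻¹ i))
    have hv : sVal E (Fin.rev ((Tuple.sort h.eigenvalues)⁻¹ i))
        = Real.sqrt (h.eigenvalues i) := by
      unfold sVal
      rw [Fin.rev_rev]
      congr 1
      exact congrArg _ (Equiv.apply_symm_apply _ i)
    rw [hv] at this
    exact this
  calc h.eigenvalues i = (Real.sqrt (h.eigenvalues i)) ^ 2 := (Real.sq_sqrt h0).symm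
    _ ≤ (sOne E) ^ 2 := by
        have := Real.sqrt_nonneg (h.eigenvalues i)
        nlinarith

lemma psd_sOne_sub_mul_ct {d : ℕ} (E : Matrix (Fin d) (Fin d) ℝ) :
    ((sOne E) ^ 2 • (1 : Matrix (Fin d) (Fin d) ℝ) - E * Eᵀ).PosSemidef := by
  have hct : Eᵀ = Eᴴ := by ext i j; simp [Matrix.conjTranspose_apply]
  rw [hct]
  set h := Matrix.isHermitian_mul_conjTranspose_self E with hh
  set c := (sOne E) ^ 2 with hc
  set U : Matrix (Fin d) (Fin d) ℝ := (h.eigenvectorUnitary : Matrix (Fin d) (Fin d) ℝ) with hU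
  have hUU : U * star U = 1 := (Matrix.mem_unitaryGroup_iff).mp h.eigenvectorUnitary.2
  have key : c • (1 : Matrix (Fin d) (Fin d) ℝ) - E * Eᴴ
      = U * Matrix.diagonal (fun i => c - h.eigenvalues i) * star U := by
    have hspec := h.spectral_theorem
    have h1 : c • (1 : Matrix (Fin d) (Fin d) ℝ) = U * (c • 1) * star U := by
      rw [Matrix.mul_smul, Matrix.smul_mul, Matrix.mul_one, hUU]
    have hdiag : Matrix.diagonal (fun i => c - h.eigenvalues i)
        = c • (1 : Matrix (Fin d) (Fin d) ℝ)
          - Matrix.diagonal (RCLike.ofReal ∘ h.eigenvalues) := by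
      rw [Matrix.smul_one_eq_diagonal, ← Matrix.diagonal_sub]
      congr 1
    rw [hdiag, Matrix.mul_sub, Matrix.sub_mul, ← h1]
    congr 1
  rw [key, Matrix.star_eq_conjTranspose]
  exact (Matrix.posSemidef_diagonal_iff.mpr
    (fun i => sub_nonneg.mpr (eig_le_sOne_sq E i))).mul_mul_conjTranspose_same U

lemma psd_sOne_sub_ct_mul {d : ℕ} (E : Matrix (Fin d) (Fin d) ℝ) :
    ((sOne E) ^ 2 • (1 : Matrix (Fin d) (Fin d) ℝ) - Eᵀ * E).PosSemidef := by
  set c := (sOne E) ^ 2 with hcdef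
  have hc : 0 ≤ c := sq_nonneg _
  have hstar : ∀ y : Fin d → ℝ, star y = y := fun y => funext fun i => star_trivial _
  have hq : ∀ y : Fin d → ℝ, (Eᵀ *ᵥ y) ⬝ᵥ (Eᵀ *ᵥ y) ≤ c * (y ⬝ᵥ y) := by
    intro y
    have h0 := (psd_sOne_sub_mul_ct E).dotProduct_mulVec_nonneg y
    rw [hstar, Matrix.sub_mulVec, dotProduct_sub, ← Matrix.mulVec_mulVec,
      Matrix.dotProduct_mulVec y E, ← Matrix.mulVec_transpose] at h0
    have h1 : y ⬝ᵥ ((c • (1 : Matrix (Fin d) (Fin d) ℝ)) *ᵥ y) = c * (y ⬝ᵥ y) := by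
      rw [Matrix.smul_mulVec, Matrix.one_mulVec, dotProduct_smul, smul_eq_mul]
    rw [h1] at h0
    linarith
  have cs : ∀ v w : Fin d → ℝ, (v ⬝ᵥ w)^2 ≤ (v ⬝ᵥ v) * (w ⬝ᵥ w) := by
    intro v w
    simp only [dotProduct, ← sq]
    have := Finset.sum_mul_sq_le_sq_mul_sq Finset.univ v w
    simpa [sq] using this
  have dpn : ∀ v : Fin d → ℝ, 0 ≤ v ⬝ᵥ v := by
    intro v
    exact Finset.sum_nonneg fun i _ => mul_self_nonneg _
  refine Matrix.PosSemidef.of_dotProduct_mulVec_nonneg ?_ ?_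
  · have h1 : ((c : ℝ) • (1 : Matrix (Fin d) (Fin d) ℝ)).IsHermitian := by
      unfold Matrix.IsHermitian
      rw [Matrix.conjTranspose_smul, Matrix.conjTranspose_one, star_trivial]
    have h2 : (Eᵀ * E).IsHermitian := by
      have := Matrix.isHermitian_conjTranspose_mul_self E
      have hct : Eᴴ = Eᵀ := by ext i j; simp [Matrix.conjTranspose_apply]
      rwa [hct] at this
    exact h1.sub h2
  · intro x
    rw [hstar, Matrix.sub_mulVec, dotProduct_sub]
    have h1 : x ⬝ᵥ ((c • (1 : Matrix (Fin d) (Fin d) ℝ)) *ᵥ x) = c * (x ⬝ᵥ x) := by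
      rw [Matrix.smul_mulVec, Matrix.one_mulVec, dotProduct_smul, smul_eq_mul]
    have h2 : x ⬝ᵥ ((Eᵀ * E) *ᵥ x) = (E *ᵥ x) ⬝ᵥ (E *ᵥ x) := by
      rw [← Matrix.mulVec_mulVec, Matrix.dotProduct_mulVec x Eᵀ, Matrix.vecMul_transpose]
    rw [h1, h2]
    set u := E *ᵥ x with hu
    set a := u ⬝ᵥ u with ha
    have h3 : a = (Eᵀ *ᵥ u) ⬝ᵥ x := by
      rw [ha, hu]
      conv_lhs => rw [Matrix.dotProduct_mulVec u E, ← Matrix.mulVec_transpose]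
    have h4 : a ^ 2 ≤ (c * a) * (x ⬝ᵥ x) := by
      calc a ^ 2 = ((Eᵀ *ᵥ u) ⬝ᵥ x) ^ 2 := by rw [h3]
        _ ≤ ((Eᵀ *ᵥ u) ⬝ᵥ (Eᵀ *ᵥ u)) * (x ⬝ᵥ x) := cs _ _
        _ ≤ (c * a) * (x ⬝ᵥ x) := mul_le_mul_of_nonneg_right (hq u) (dpn x)
    have ha0 : 0 ≤ a := dpn u
    rcases eq_or_lt_of_le ha0 with h | h
    · have : a = 0 := h.symm
      rw [this, sub_zero]
      exact mul_nonneg hc (dpn x)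
    · nlinarith [dpn x]


lemma master {d : ℕ} (X Y : Matrix (Fin d) (Fin d) ℝ) (q : ℕ)
    (hε1 : sOne (X - Y) ≤ 1) :
    |((X * Xᵀ) ^ q).trace - ((Y * Yᵀ) ^ q).trace| ≤
      3 * q * Real.sqrt (sOne (X - Y)) *
        (16 ^ q * (∑ k ∈ Finset.range (4 * q + 2), ((Y * Yᵀ) ^ k).trace)
          + (∑ k ∈ Finset.range (4 * q + 2), ((Y * Yᵀ) ^ k).trace) + d) := by
  set E := X - Y with hE
  set ε := sOne E with hεdef
  set A := X * Xᵀ with hAdef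
  set B := Y * Yᵀ with hBdef
  set S' := ∑ k ∈ Finset.range (4 * q + 2), (B ^ k).trace with hS'def
  set D := 16 ^ q * S' + S' + (d : ℝ) with hDdef
  have hε0 : 0 ≤ ε := sOne_nonneg E
  have hct : ∀ M : Matrix (Fin d) (Fin d) ℝ, Mᴴ = Mᵀ := fun M => by
    ext i j; simp [Matrix.conjTranspose_apply]
  have hA : A.PosSemidef := by
    have := Matrix.posSemidef_self_mul_conjTranspose X
    rwa [hct] at this
  have hB : B.PosSemidef := by
    have := Matrix.posSemidef_self_mul_conjTranspose Y
    rwa [hct] at this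
  have hAt : Aᵀ = A := by
    have := hA.1.eq; rwa [hct] at this
  have hBt : Bᵀ = B := by
    have := hB.1.eq; rwa [hct] at this
  have hBpt : ∀ k : ℕ, (B ^ k)ᵀ = B ^ k := fun k => by
    rw [Matrix.transpose_pow, hBt]
  have hApt : ∀ k : ℕ, (A ^ k)ᵀ = A ^ k := fun k => by
    rw [Matrix.transpose_pow, hAt]
  have hTrBk : ∀ k : ℕ, 0 ≤ (B ^ k).trace := fun k => psd_trace_nonneg (hB.pow k)
  have hS'0 : 0 ≤ S' := Finset.sum_nonneg fun k _ => hTrBk k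
  have hD0 : 0 ≤ D := by positivity
  have hBkD : ∀ k : ℕ, k < 4 * q + 2 → (B ^ k).trace ≤ D := by
    intro k hk
    have h1 : (B ^ k).trace ≤ S' :=
      Finset.single_le_sum (fun i _ => hTrBk i) (Finset.mem_range.mpr hk)
    have h2 : (0:ℝ) ≤ 16 ^ q * S' := by positivity
    have h3 : (0:ℝ) ≤ (d:ℝ) := Nat.cast_nonneg d
    rw [hDdef]; linarith
  have hEE : (ε ^ 2 • (1 : Matrix (Fin d) (Fin d) ℝ) - E * Eᵀ).PosSemidef :=
    psd_sOne_sub_mul_ct E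
  have hETE : (ε ^ 2 • (1 : Matrix (Fin d) (Fin d) ℝ) - Eᵀ * E).PosSemidef :=
    psd_sOne_sub_ct_mul E
  have hX : X = Y + E := by rw [hE]; abel
  -- A-moment bound
  have hABpsd : (((2:ℝ) • B + (2 * ε ^ 2) • (1 : Matrix (Fin d) (Fin d) ℝ)) - A).PosSemidef := by
    have hXT : Xᵀ = Yᵀ + Eᵀ := by rw [hX, Matrix.transpose_add]
    have key : ((2:ℝ) • B + (2 * ε ^ 2) • (1 : Matrix (Fin d) (Fin d) ℝ)) - A
        = (Y - E) * (Y - E)ᵀ + (2:ℝ) • (ε ^ 2 • (1 : Matrix (Fin d) (Fin d) ℝ) - E * Eᵀ) := by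
      have e1 : (Y - E) * (Y - E)ᵀ = Y * Yᵀ - Y * Eᵀ - E * Yᵀ + E * Eᵀ := by
        rw [Matrix.transpose_sub]
        simp only [Matrix.sub_mul, Matrix.mul_sub]
        abel
      have e2 : A = Y * Yᵀ + Y * Eᵀ + E * Yᵀ + E * Eᵀ := by
        rw [hAdef, hXT, hX]
        simp only [Matrix.add_mul, Matrix.mul_add]
        abel
      have e3 : (2 * ε ^ 2) • (1 : Matrix (Fin d) (Fin d) ℝ)
          = ε ^ 2 • (1 : Matrix (Fin d) (Fin d) ℝ) + ε ^ 2 • (1 : Matrix (Fin d) (Fin d) ℝ) := by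
        rw [two_mul, add_smul]
      rw [e1, e2, e3, hBdef, two_smul, two_smul]
      abel
    rw [key]
    have h1 : ((Y - E) * (Y - E)ᵀ).PosSemidef := by
      have := Matrix.posSemidef_self_mul_conjTranspose (Y - E)
      rwa [hct] at this
    exact h1.add (psd_smul hEE (by norm_num))
  have hTrA : ∀ nn : ℕ, nn ≤ 2 * q → (A ^ nn).trace ≤ D := by
    intro nn hnn
    have h1 : (A ^ nn).trace
        ≤ (((2:ℝ) • B + (2 * ε ^ 2) • (1 : Matrix (Fin d) (Fin d) ℝ)) ^ nn).trace :=
      trace_pow_mono hA hABpsd nn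
    have hcomm : Commute ((2:ℝ) • B) ((2 * ε ^ 2) • (1 : Matrix (Fin d) (Fin d) ℝ)) :=
      (Commute.one_right ((2:ℝ) • B)).smul_right _
    have hcast : ∀ c : ℕ, (c : Matrix (Fin d) (Fin d) ℝ) = (c : ℝ) • 1 := by
      intro c
      rw [Matrix.smul_one_eq_diagonal]
      exact (Matrix.diagonal_natCast _).symm
    have h2 : (((2:ℝ) • B + (2 * ε ^ 2) • (1 : Matrix (Fin d) (Fin d) ℝ)) ^ nn).trace
        = ∑ k ∈ Finset.range (nn + 1),
            (2 ^ k * (2 * ε ^ 2) ^ (nn - k) * (nn.choose k : ℝ)) * (B ^ k).trace := by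
      rw [Commute.add_pow hcomm, Matrix.trace_sum]
      refine Finset.sum_congr rfl fun k hk => ?_
      rw [smul_pow, smul_pow, one_pow, hcast]
      rw [Matrix.smul_mul, Matrix.smul_mul, Matrix.mul_smul, Matrix.mul_smul, Matrix.mul_one]
      rw [trace_smul, trace_smul, trace_smul, smul_eq_mul, smul_eq_mul, smul_eq_mul]
      ring
    have h3 : ∑ k ∈ Finset.range (nn + 1),
          (2 ^ k * (2 * ε ^ 2) ^ (nn - k) * (nn.choose k : ℝ)) * (B ^ k).trace
        ≤ ∑ k ∈ Finset.range (nn + 1), (2 ^ nn * (nn.choose k : ℝ)) * S' := by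
      refine Finset.sum_le_sum fun k hk => ?_
      rw [Finset.mem_range] at hk
      have hk' : k ≤ nn := by omega
      have hε2 : (0:ℝ) ≤ 2 * ε ^ 2 := by positivity
      have hε2' : 2 * ε ^ 2 ≤ 2 := by nlinarith
      have hcoef : (2:ℝ) ^ k * (2 * ε ^ 2) ^ (nn - k) * (nn.choose k : ℝ)
          ≤ 2 ^ nn * (nn.choose k : ℝ) := by
        have hp : (2 * ε ^ 2) ^ (nn - k) ≤ (2:ℝ) ^ (nn - k) := pow_le_pow_left₀ hε2 hε2' _
        have h2n : (2:ℝ) ^ k * 2 ^ (nn - k) = 2 ^ nn := by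
          rw [← pow_add]; congr 1; omega
        have hcn : (0:ℝ) ≤ (nn.choose k : ℝ) := Nat.cast_nonneg _
        calc (2:ℝ) ^ k * (2 * ε ^ 2) ^ (nn - k) * (nn.choose k : ℝ)
            ≤ (2:ℝ) ^ k * 2 ^ (nn - k) * (nn.choose k : ℝ) :=
              mul_le_mul_of_nonneg_right
                (mul_le_mul_of_nonneg_left hp (by positivity)) hcn
          _ = 2 ^ nn * (nn.choose k : ℝ) := by rw [h2n]
      have hBS : (B ^ k).trace ≤ S' :=
        Finset.single_le_sum (fun i _ => hTrBk i) (Finset.mem_range.mpr (by omega))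
      have hcoef0 : (0:ℝ) ≤ 2 ^ k * (2 * ε ^ 2) ^ (nn - k) * (nn.choose k : ℝ) := by positivity
      exact mul_le_mul hcoef hBS (hTrBk k) (by positivity)
    have h4 : ∑ k ∈ Finset.range (nn + 1), (2 ^ nn * (nn.choose k : ℝ)) * S'
        = 4 ^ nn * S' := by
      rw [← Finset.sum_mul]
      rw [← Finset.mul_sum]
      have : ∑ k ∈ Finset.range (nn + 1), (nn.choose k : ℝ) = 2 ^ nn := by
        rw [← Nat.cast_sum]
        rw [Nat.sum_range_choose]
        push_cast; ring
      rw [this]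
      have h4n : (2:ℝ) ^ nn * 2 ^ nn = 4 ^ nn := by
        rw [← pow_add]
        have : nn + nn = 2 * nn := by omega
        rw [this, pow_mul]; norm_num
      rw [h4n]
    have h5 : (4:ℝ) ^ nn * S' ≤ 16 ^ q * S' := by
      have h45 : (4:ℝ) ^ nn ≤ 16 ^ q := by
        have h16 : (16:ℝ) ^ q = 4 ^ (2 * q) := by rw [pow_mul]; norm_num
        rw [h16]
        exact pow_le_pow_right₀ (by norm_num) hnn
      exact mul_le_mul_of_nonneg_right h45 hS'0
    have h6 : (16:ℝ) ^ q * S' ≤ D := by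
      have h3' : (0:ℝ) ≤ (d:ℝ) := Nat.cast_nonneg d
      rw [hDdef]; linarith
    calc (A ^ nn).trace ≤ _ := h1
      _ = _ := h2
      _ ≤ _ := h3
      _ = _ := h4
      _ ≤ _ := h5
      _ ≤ _ := h6
  -- helpers for trace gymnastics
  have hsmul_le : ∀ {P Q : Matrix (Fin d) (Fin d) ℝ},
      (ε ^ 2 • (1 : Matrix (Fin d) (Fin d) ℝ) - P).PosSemidef → Q.PosSemidef →
      (Q * P).trace ≤ ε ^ 2 * Q.trace := by
    intro P Q hP hQ
    rw [Matrix.trace_mul_comm]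
    exact trace_mul_le_smul hP hQ
  have hq2 : ∀ R Q : Matrix (Fin d) (Fin d) ℝ,
      ((R * Q) * (R * Q)ᵀ).trace = ((Q * Qᵀ) * (Rᵀ * R)).trace := by
    intro R Q
    rw [Matrix.transpose_mul]
    simp only [Matrix.mul_assoc]
    rw [Matrix.trace_mul_comm R]
    simp only [Matrix.mul_assoc]
  have hpsdQQ : ∀ Q : Matrix (Fin d) (Fin d) ℝ, (Q * Qᵀ).PosSemidef := by
    intro Q
    have := Matrix.posSemidef_self_mul_conjTranspose Q
    rwa [hct] at this
  have key_term : ∀ j, j < q →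
      |(A ^ j * (A - B) * B ^ (q - 1 - j)).trace| ≤ 3 * (Real.sqrt ε * D) := by
    intro j hj
    set m := q - 1 - j with hm
    have h2j : 2 * j ≤ 2 * q := by omega
    have h2m1 : 2 * m + 1 < 4 * q + 2 := by omega
    have h2m : 2 * m < 4 * q + 2 := by omega
    have h4m : 4 * m < 4 * q + 2 := by omega
    have h2lt : 2 < 4 * q + 2 := by omega
    have hee : ε ^ 2 ≤ ε := by nlinarith
    -- generic CS bound
    have bound1 : ∀ N : Matrix (Fin d) (Fin d) ℝ, (N * Nᵀ).trace ≤ ε * D →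
        |(A ^ j * N).trace| ≤ Real.sqrt ε * D := by
      intro N hN
      have h := trace_CS (A ^ j) N
      have hMM : (A ^ j * (A ^ j)ᵀ).trace = (A ^ (2 * j)).trace := by
        rw [hApt j, ← pow_add]
        congr 2
        omega
      have hMMle : (A ^ j * (A ^ j)ᵀ).trace ≤ D := by
        rw [hMM]; exact hTrA _ h2j
      have hprod : (A ^ j * (A ^ j)ᵀ).trace * (N * Nᵀ).trace ≤ D * (ε * D) :=
        mul_le_mul hMMle hN (trace_self_nonneg' N) hD0
      calc |(A ^ j * N).trace| ≤ _ := h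
        _ ≤ Real.sqrt (D * (ε * D)) := Real.sqrt_le_sqrt hprod
        _ = Real.sqrt ε * D := by
            rw [show D * (ε * D) = ε * D ^ 2 by ring, Real.sqrt_mul hε0, Real.sqrt_sq hD0]
    -- decomposition of A - B
    have hXT : Xᵀ = Yᵀ + Eᵀ := by rw [hX, Matrix.transpose_add]
    have hsplit : A - B = E * Yᵀ + Y * Eᵀ + E * Eᵀ := by
      have e2 : A = Y * Yᵀ + Y * Eᵀ + E * Yᵀ + E * Eᵀ := by
        rw [hAdef, hXT, hX]
        simp only [Matrix.add_mul, Matrix.mul_add]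
        abel
      rw [e2, hBdef]
      abel
    -- Term 1 : N = E * (Yᵀ * B^m)
    have hT1 : |(A ^ j * (E * (Yᵀ * B ^ m))).trace| ≤ Real.sqrt ε * D := by
      apply bound1
      have h1 := hq2 E (Yᵀ * B ^ m)
      have hQQ : ((Yᵀ * B ^ m) * (Yᵀ * B ^ m)ᵀ).trace = (B ^ (2 * m + 1)).trace := by
        rw [Matrix.transpose_mul, Matrix.transpose_pow, hBt, Matrix.transpose_transpose]
        simp only [Matrix.mul_assoc]
        rw [Matrix.trace_mul_comm Yᵀ]
        simp only [Matrix.mul_assoc]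
        rw [← hBdef, ← pow_succ, ← pow_add]
        congr 2
        omega
      have h2 : (((Yᵀ * B ^ m) * (Yᵀ * B ^ m)ᵀ) * (Eᵀ * E)).trace
          ≤ ε ^ 2 * (B ^ (2 * m + 1)).trace := by
        have := hsmul_le hETE (hpsdQQ (Yᵀ * B ^ m))
        rwa [hQQ] at this
      calc ((E * (Yᵀ * B ^ m)) * (E * (Yᵀ * B ^ m))ᵀ).trace
          = (((Yᵀ * B ^ m) * (Yᵀ * B ^ m)ᵀ) * (Eᵀ * E)).trace := h1
        _ ≤ ε ^ 2 * (B ^ (2 * m + 1)).trace := h2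
        _ ≤ ε * D := by nlinarith [hBkD _ h2m1, hTrBk (2 * m + 1)]
    -- Term 3 : N = E * (Eᵀ * B^m)
    have hQ3 : ((Eᵀ * B ^ m) * (Eᵀ * B ^ m)ᵀ).trace ≤ ε ^ 2 * (B ^ (2 * m)).trace := by
      rw [Matrix.transpose_mul, Matrix.transpose_pow, hBt, Matrix.transpose_transpose]
      simp only [Matrix.mul_assoc]
      rw [Matrix.trace_mul_comm Eᵀ]
      simp only [Matrix.mul_assoc]
      rw [← Matrix.mul_assoc (B ^ m) (B ^ m), ← pow_add]
      have hmm : m + m = 2 * m := by omega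
      rw [hmm]
      exact hsmul_le hEE (hB.pow (2 * m))
    have hT3 : |(A ^ j * (E * (Eᵀ * B ^ m))).trace| ≤ Real.sqrt ε * D := by
      apply bound1
      have h1 := hq2 E (Eᵀ * B ^ m)
      have h2 : (((Eᵀ * B ^ m) * (Eᵀ * B ^ m)ᵀ) * (Eᵀ * E)).trace
          ≤ ε ^ 2 * (((Eᵀ * B ^ m) * (Eᵀ * B ^ m)ᵀ)).trace :=
        hsmul_le hETE (hpsdQQ (Eᵀ * B ^ m))
      calc ((E * (Eᵀ * B ^ m)) * (E * (Eᵀ * B ^ m))ᵀ).trace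
          = (((Eᵀ * B ^ m) * (Eᵀ * B ^ m)ᵀ) * (Eᵀ * E)).trace := h1
        _ ≤ ε ^ 2 * (((Eᵀ * B ^ m) * (Eᵀ * B ^ m)ᵀ)).trace := h2
        _ ≤ ε * D := by
            have h4 := hBkD _ h2m
            have e4 : ε ^ 4 ≤ ε := by nlinarith
            calc ε ^ 2 * (((Eᵀ * B ^ m) * (Eᵀ * B ^ m)ᵀ)).trace
                ≤ ε ^ 2 * (ε ^ 2 * (B ^ (2 * m)).trace) :=
                  mul_le_mul_of_nonneg_left hQ3 (sq_nonneg ε)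
              _ = ε ^ 4 * (B ^ (2 * m)).trace := by ring
              _ ≤ ε ^ 4 * D := mul_le_mul_of_nonneg_left h4 (by positivity)
              _ ≤ ε * D := mul_le_mul_of_nonneg_right e4 hD0
    -- Term 2 : N = Y * (Eᵀ * B^m)
    have hT2 : |(A ^ j * (Y * (Eᵀ * B ^ m))).trace| ≤ Real.sqrt ε * D := by
      apply bound1
      have h1 := hq2 Y (Eᵀ * B ^ m)
      set G := (Eᵀ * B ^ m) * (Eᵀ * B ^ m)ᵀ with hG
      have hGt : Gᵀ = G := by
        rw [hG, Matrix.transpose_mul, Matrix.transpose_transpose]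
      have hGpsd : G.PosSemidef := hpsdQQ _
      -- tr(G * G) ≤ ε^4 * tr(B^(4m))
      have hGG : (G * Gᵀ).trace ≤ ε ^ 2 * (ε ^ 2 * (B ^ (4 * m)).trace) := by
        rw [hGt]
        have hGexp : G = Eᵀ * (B ^ m * (B ^ m * E)) := by
          rw [hG, Matrix.transpose_mul, Matrix.transpose_pow, hBt,
            Matrix.transpose_transpose]
          simp only [Matrix.mul_assoc]
        have hrot : (G * G).trace
            = ((B ^ m * ((B ^ m * E) * (Eᵀ * B ^ m)) * B ^ m) * (E * Eᵀ)).trace := by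
          rw [hGexp]
          simp only [Matrix.mul_assoc]
          rw [Matrix.trace_mul_comm Eᵀ]
          simp only [Matrix.mul_assoc]
        have hmid : (B ^ m * ((B ^ m * E) * (Eᵀ * B ^ m)) * B ^ m).PosSemidef := by
          have hin : ((B ^ m * E) * (Eᵀ * B ^ m)) = (B ^ m * E) * (B ^ m * E)ᴴ := by
            rw [hct, Matrix.transpose_mul, Matrix.transpose_pow, hBt]
          have hpsd0 : ((B ^ m * E) * (Eᵀ * B ^ m)).PosSemidef := by
            rw [hin]; exact Matrix.posSemidef_self_mul_conjTranspose _
          have := hpsd0.mul_mul_conjTranspose_same (B ^ m)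
          rwa [hct, hBpt] at this
        have hstep1 : (G * G).trace
            ≤ ε ^ 2 * (B ^ m * ((B ^ m * E) * (Eᵀ * B ^ m)) * B ^ m).trace := by
          rw [hrot]
          exact hsmul_le hEE hmid
        have hstep2 : (B ^ m * ((B ^ m * E) * (Eᵀ * B ^ m)) * B ^ m).trace
            ≤ ε ^ 2 * (B ^ (4 * m)).trace := by
          have hrot2 : (B ^ m * ((B ^ m * E) * (Eᵀ * B ^ m)) * B ^ m).trace
              = ((B ^ (4 * m)) * (E * Eᵀ)).trace := by
            simp only [Matrix.mul_assoc]
            rw [Matrix.trace_mul_comm (B ^ m)]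
            simp only [Matrix.mul_assoc]
            rw [Matrix.trace_mul_comm (B ^ m)]
            simp only [Matrix.mul_assoc]
            rw [Matrix.trace_mul_comm E]
            simp only [Matrix.mul_assoc]
            rw [Matrix.trace_mul_comm Eᵀ]
            simp only [Matrix.mul_assoc]
            rw [← Matrix.mul_assoc (B ^ m) (B ^ m), ← pow_add,
              ← Matrix.mul_assoc (B ^ (m + m)) (B ^ m), ← pow_add,
              ← Matrix.mul_assoc (B ^ (m + m + m)) (B ^ m), ← pow_add]
            have : m + m + m + m = 4 * m := by omega
            rw [this]
          rw [hrot2]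
          exact hsmul_le hEE (hB.pow (4 * m))
        calc (G * G).trace ≤ _ := hstep1
          _ ≤ ε ^ 2 * (ε ^ 2 * (B ^ (4 * m)).trace) := by nlinarith [hε0]
      -- tr((YᵀY)(YᵀY)) = tr(B^2)
      have hYY : ((Yᵀ * Y) * (Yᵀ * Y)ᵀ).trace = (B ^ 2).trace := by
        rw [Matrix.transpose_mul, Matrix.transpose_transpose]
        simp only [Matrix.mul_assoc]
        rw [Matrix.trace_mul_comm Yᵀ]
        simp only [Matrix.mul_assoc]
        rw [← hBdef, ← Matrix.mul_assoc Y Yᵀ, ← hBdef, ← sq]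
      -- combine with CS
      have hCS := trace_CS G (Yᵀ * Y)
      have hGG' : (G * Gᵀ).trace ≤ ε ^ 2 * (ε ^ 2 * D) := by
        have h4 := hBkD _ h4m
        calc (G * Gᵀ).trace ≤ ε ^ 2 * (ε ^ 2 * (B ^ (4 * m)).trace) := hGG
          _ ≤ ε ^ 2 * (ε ^ 2 * D) :=
              mul_le_mul_of_nonneg_left
                (mul_le_mul_of_nonneg_left h4 (sq_nonneg ε)) (sq_nonneg ε)
      have hB2 : ((Yᵀ * Y) * (Yᵀ * Y)ᵀ).trace ≤ D := by rw [hYY]; exact hBkD _ h2lt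
      have hprod : (G * Gᵀ).trace * ((Yᵀ * Y) * (Yᵀ * Y)ᵀ).trace
          ≤ (ε ^ 2 * (ε ^ 2 * D)) * D :=
        mul_le_mul hGG' hB2 (trace_self_nonneg' _) (by positivity)
      have hsq : Real.sqrt ((ε ^ 2 * (ε ^ 2 * D)) * D) = ε ^ 2 * D := by
        rw [show (ε ^ 2 * (ε ^ 2 * D)) * D = (ε ^ 2 * D) ^ 2 by ring]
        exact Real.sqrt_sq (by positivity)
      have hNN : ((Y * (Eᵀ * B ^ m)) * (Y * (Eᵀ * B ^ m))ᵀ).trace ≤ ε ^ 2 * D := by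
        rw [h1]
        calc (G * (Yᵀ * Y)).trace ≤ |(G * (Yᵀ * Y)).trace| := le_abs_self _
          _ ≤ Real.sqrt ((G * Gᵀ).trace * (((Yᵀ * Y) * (Yᵀ * Y)ᵀ)).trace) := hCS
          _ ≤ Real.sqrt ((ε ^ 2 * (ε ^ 2 * D)) * D) := Real.sqrt_le_sqrt hprod
          _ = ε ^ 2 * D := hsq
      calc ((Y * (Eᵀ * B ^ m)) * (Y * (Eᵀ * B ^ m))ᵀ).trace ≤ ε ^ 2 * D := hNN
        _ ≤ ε * D := by nlinarith
    -- put the three terms together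
    have hdecomp : (A ^ j * (A - B) * B ^ m).trace
        = (A ^ j * (E * (Yᵀ * B ^ m))).trace + (A ^ j * (Y * (Eᵀ * B ^ m))).trace
          + (A ^ j * (E * (Eᵀ * B ^ m))).trace := by
      rw [hsplit]
      simp only [Matrix.mul_add, Matrix.add_mul, Matrix.trace_add, Matrix.mul_assoc]
    rw [hdecomp]
    calc |_ + _ + _| ≤ |(A ^ j * (E * (Yᵀ * B ^ m))).trace|
          + |(A ^ j * (Y * (Eᵀ * B ^ m))).trace| + |(A ^ j * (E * (Eᵀ * B ^ m))).trace| := by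
          exact (abs_add_le _ _).trans (by gcongr; exact abs_add_le _ _)
      _ ≤ 3 * (Real.sqrt ε * D) := by linarith [hT1, hT2, hT3]
  -- final assembly
  have htel : (A ^ q).trace - (B ^ q).trace
      = ∑ j ∈ Finset.range q, (A ^ j * (A - B) * B ^ (q - 1 - j)).trace := by
    rw [← Matrix.trace_sub, telescope A B q, Matrix.trace_sum]
  rw [htel]
  calc |∑ j ∈ Finset.range q, (A ^ j * (A - B) * B ^ (q - 1 - j)).trace|
      ≤ ∑ j ∈ Finset.range q, |(A ^ j * (A - B) * B ^ (q - 1 - j)).trace| :=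
        Finset.abs_sum_le_sum_abs _ _
    _ ≤ ∑ _j ∈ Finset.range q, 3 * (Real.sqrt ε * D) :=
        Finset.sum_le_sum fun j hj => key_term j (Finset.mem_range.mp hj)
    _ = q * (3 * (Real.sqrt ε * D)) := by
        rw [Finset.sum_const, Finset.card_range, nsmul_eq_mul]
    _ = 3 * q * Real.sqrt ε * D := by ring


end helper

/-- Let `X_d, Y_d` be `d × d` real matrices with `‖X_d − Y_d‖ → 0`, and for
every `q ∈ ℕ` suppose `(1/d) Tr((Y_d Y_dᵀ)^q) → m_q ∈ [0,∞)`. Then for every `q ∈ ℕ`,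
`(1/d) Tr((X_d X_dᵀ)^q) → m_q`. -/
theorem stmt17 (X Y : (d : ℕ) → Matrix (Fin d) (Fin d) ℝ) (m : ℕ → ℝ)
    (hnorm : Tendsto (fun d : ℕ => sOne (X d - Y d)) atTop (nhds 0))
    (hm : ∀ q : ℕ, 0 ≤ m q ∧
      Tendsto (fun d : ℕ => (1 / (d : ℝ)) * ((Y d * (Y d)ᵀ) ^ q).trace) atTop (nhds (m q))) :
    ∀ q : ℕ,
      Tendsto (fun d : ℕ => (1 / (d : ℝ)) * ((X d * (X d)ᵀ) ^ q).trace) atTop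
        (nhds (m q)) := by
  intro q
  have hg := (hm q).2
  have hS : Tendsto (fun d : ℕ => ∑ k ∈ Finset.range (4 * q + 2),
      (1 / (d : ℝ)) * ((Y d * (Y d)ᵀ) ^ k).trace) atTop
      (nhds (∑ k ∈ Finset.range (4 * q + 2), m k)) :=
    tendsto_finset_sum _ (fun k _ => (hm k).2)
  have hsqrt : Tendsto (fun d : ℕ => Real.sqrt (sOne (X d - Y d))) atTop (nhds 0) := by
    have := hnorm.sqrt
    rwa [Real.sqrt_zero] at this
  set T : ℕ → ℝ := fun d => 16 ^ q * (∑ k ∈ Finset.range (4 * q + 2),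
      (1 / (d : ℝ)) * ((Y d * (Y d)ᵀ) ^ k).trace)
    + (∑ k ∈ Finset.range (4 * q + 2), (1 / (d : ℝ)) * ((Y d * (Y d)ᵀ) ^ k).trace) + 1 with hT
  have hTt : Tendsto T atTop (nhds (16 ^ q * (∑ k ∈ Finset.range (4 * q + 2), m k)
      + (∑ k ∈ Finset.range (4 * q + 2), m k) + 1)) :=
    ((tendsto_const_nhds.mul hS).add hS).add tendsto_const_nhds
  have hb : Tendsto (fun d : ℕ => 3 * (q : ℝ) * Real.sqrt (sOne (X d - Y d)) * T d) atTop
      (nhds 0) := by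
    have h0 := ((tendsto_const_nhds (x := 3 * (q : ℝ))).mul hsqrt).mul hTt
    simpa using h0
  have hev : ∀ᶠ d : ℕ in atTop,
      ‖(1 / (d : ℝ)) * ((X d * (X d)ᵀ) ^ q).trace
        - (1 / (d : ℝ)) * ((Y d * (Y d)ᵀ) ^ q).trace‖
        ≤ 3 * (q : ℝ) * Real.sqrt (sOne (X d - Y d)) * T d := by
    filter_upwards [hnorm.eventually_le_const zero_lt_one, Filter.eventually_gt_atTop 0]
      with d hε1 hd
    have hd0 : (0 : ℝ) < (d : ℝ) := by exact_mod_cast hd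
    have hmas := master (X d) (Y d) q hε1
    have habs : ‖(1 / (d : ℝ)) * ((X d * (X d)ᵀ) ^ q).trace
        - (1 / (d : ℝ)) * ((Y d * (Y d)ᵀ) ^ q).trace‖
        = (1 / (d : ℝ)) * |((X d * (X d)ᵀ) ^ q).trace - ((Y d * (Y d)ᵀ) ^ q).trace| := by
      rw [Real.norm_eq_abs, ← mul_sub, abs_mul, abs_of_pos (by positivity)]
    rw [habs]
    have h2 : (1 / (d : ℝ)) * (3 * q * Real.sqrt (sOne (X d - Y d)) *
        (16 ^ q * (∑ k ∈ Finset.range (4 * q + 2), ((Y d * (Y d)ᵀ) ^ k).trace)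
          + (∑ k ∈ Finset.range (4 * q + 2), ((Y d * (Y d)ᵀ) ^ k).trace) + (d : ℝ)))
        = 3 * (q : ℝ) * Real.sqrt (sOne (X d - Y d)) * T d := by
      rw [hT]
      simp only [← Finset.mul_sum]
      field_simp
    calc (1 / (d : ℝ)) * |((X d * (X d)ᵀ) ^ q).trace - ((Y d * (Y d)ᵀ) ^ q).trace|
        ≤ (1 / (d : ℝ)) * (3 * q * Real.sqrt (sOne (X d - Y d)) *
          (16 ^ q * (∑ k ∈ Finset.range (4 * q + 2), ((Y d * (Y d)ᵀ) ^ k).trace)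
            + (∑ k ∈ Finset.range (4 * q + 2), ((Y d * (Y d)ᵀ) ^ k).trace) + (d : ℝ))) :=
          mul_le_mul_of_nonneg_left hmas (by positivity)
      _ = _ := h2
  have hdiff := squeeze_zero_norm' hev hb
  have hfinal := hdiff.add hg
  simpa using hfinal
end

section
/- Let α > 0 and β > 0. Then for every w with 0 < w < 1/β: 1/w + α² w + β² w/(1 − β² w²) > 2 √(α² + β²). -/
/-!
By AM–GM, `2√(α² + β²) ≤ 1/w + (α² + β²)w`, and for `0 < βw < 1` the term
`β²w/(1 − β²w²)` strictly exceeds `β²w`.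
-/

lemma two_sqrt_le_one_div_add_mul {c w : ℝ} (hc : 0 ≤ c) (hw : 0 < w) :
    2 * Real.sqrt c ≤ 1 / w + c * w := by
  have hs : Real.sqrt c ^ 2 = c := Real.sq_sqrt hc
  rw [div_add' _ _ _ hw.ne', le_div_iff₀ hw]
  linear_combination sq_nonneg (Real.sqrt c * w - 1) + w ^ 2 * hs

lemma lt_div_one_sub {a t : ℝ} (ha : 0 < a) (ht₀ : 0 < t) (ht₁ : t < 1) :
    a < a / (1 - t) := by
  rw [lt_div_iff₀ (by linarith)]
  nlinarith

theorem stmt18_general (α β : ℝ) (hβ : 0 < β) :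
    ∀ w : ℝ, 0 < w → w < 1 / β →
      2 * Real.sqrt (α ^ 2 + β ^ 2) <
        1 / w + α ^ 2 * w + β ^ 2 * w / (1 - β ^ 2 * w ^ 2) := by
  intro w hw hw1
  have hβw : β * w < 1 := (lt_div_iff₀' hβ).mp hw1
  have hβw₀ : 0 < β * w := mul_pos hβ hw
  have hsq : β ^ 2 * w ^ 2 < 1 := by rw [← mul_pow]; exact pow_lt_one₀ hβw₀.le hβw two_ne_zero
  calc 2 * Real.sqrt (α ^ 2 + β ^ 2) ≤ 1 / w + (α ^ 2 + β ^ 2) * w :=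
        two_sqrt_le_one_div_add_mul (by positivity) hw
    _ = 1 / w + α ^ 2 * w + β ^ 2 * w := by ring
    _ < 1 / w + α ^ 2 * w + β ^ 2 * w / (1 - β ^ 2 * w ^ 2) := by
        gcongr
        exact lt_div_one_sub (by positivity) (by positivity) hsq

/-- Let `α, β > 0`. Then for every `w` with `0 < w < 1/β`:
`1/w + α²w + β²w/(1 − β²w²) > 2√(α² + β²)`. -/
theorem stmt18 (α β : ℝ) (hα : 0 < α) (hβ : 0 < β) :
    ∀ w : ℝ, 0 < w → w < 1 / β →
      2 * Real.sqrt (α ^ 2 + β ^ 2) <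
        1 / w + α ^ 2 * w + β ^ 2 * w / (1 - β ^ 2 * w ^ 2) :=
  stmt18_general α β hβ
end

section
/- For every γ > 0, the cubic equation γ y³ − 2γ y² + (γ + 3) y − 1 = 0 has exactly one solution y in the open interval (0, 1). -/
/-!
Writing the cubic as `γ y (1 - y)² + 3y - 1`, any root in `(0, 1)` satisfies
`3y - 1 = -γ y (1 - y)² < 0`, so it lies below `1/3`. The cubic is `-1` at `0` and `4γ/27` at
`1/3`, which gives a root there by the intermediate value theorem, and it is strictly increasing
on `(-∞, 1/3]`, which makes that root unique.
-/

open Set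

def edgeCubic (γ y : ℝ) : ℝ := γ * y ^ 3 - 2 * γ * y ^ 2 + (γ + 3) * y - 1

section

variable {γ : ℝ}

theorem edgeCubic_eq (γ y : ℝ) : edgeCubic γ y = γ * y * (1 - y) ^ 2 + (3 * y - 1) := by
  unfold edgeCubic; ring

theorem edgeCubic_zero (γ : ℝ) : edgeCubic γ 0 = -1 := by
  unfold edgeCubic; ring

theorem edgeCubic_one_third (γ : ℝ) : edgeCubic γ (1 / 3) = 4 * γ / 27 := by
  unfold edgeCubic; ring

theorem continuous_edgeCubic (γ : ℝ) : Continuous (edgeCubic γ) := by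
  unfold edgeCubic; fun_prop

theorem lt_one_third_of_edgeCubic_eq_zero (hγ : 0 < γ) {y : ℝ} (hy : y ∈ Ioo 0 1)
    (h : edgeCubic γ y = 0) : y < 1 / 3 := by
  have hpos : 0 < γ * y * (1 - y) ^ 2 :=
    mul_pos (mul_pos hγ hy.1) (pow_pos (sub_pos.2 hy.2) 2)
  rw [edgeCubic_eq] at h
  linarith

theorem strictMonoOn_edgeCubic (hγ : 0 ≤ γ) : StrictMonoOn (edgeCubic γ) (Iic (1 / 3)) := by
  intro a ha b hb hab
  set u := 1 / 3 - a
  set v := 1 / 3 - b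
  have hu : 0 ≤ u := sub_nonneg.2 ha
  have hv : 0 ≤ v := sub_nonneg.2 hb
  have hdiff : edgeCubic γ b - edgeCubic γ a
      = (b - a) * (γ * (u + v + u ^ 2 + u * v + v ^ 2) + 3) := by
    simp only [u, v, edgeCubic]; ring
  have hslope : 0 < γ * (u + v + u ^ 2 + u * v + v ^ 2) + 3 := by positivity
  rw [← sub_pos, hdiff]
  exact mul_pos (sub_pos.2 hab) hslope

end

/-- For every `γ > 0`, the cubic `γy³ − 2γy² + (γ+3)y − 1 = 0` has exactly
one solution `y` in the open interval `(0, 1)`. -/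
theorem stmt19 (γ : ℝ) (hγ : 0 < γ) :
    ∃! y : ℝ, y ∈ Set.Ioo (0 : ℝ) 1 ∧
      γ * y ^ 3 - 2 * γ * y ^ 2 + (γ + 3) * y - 1 = 0 := by
  have hsign : (0 : ℝ) ∈ Ioo (edgeCubic γ 0) (edgeCubic γ (1 / 3)) := by
    rw [edgeCubic_zero, edgeCubic_one_third]
    constructor <;> linarith
  obtain ⟨y, hy, hy_root⟩ :=
    intermediate_value_Ioo (by norm_num) (continuous_edgeCubic γ).continuousOn hsign
  refine ⟨y, ⟨⟨hy.1, hy.2.trans (by norm_num)⟩, hy_root⟩, ?_⟩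
  rintro z ⟨hz, hz_root⟩
  have hz_small : z < 1 / 3 := lt_one_third_of_edgeCubic_eq_zero hγ hz hz_root
  exact (strictMonoOn_edgeCubic hγ.le).injOn hz_small.le hy.2.le (hz_root.trans hy_root.symm)
end
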